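/- arXiv:1203.6855 — 9 statements merged into one kernel-verified Lean document; each statement's English description precedes it below -/
import Mathlib

section
/- Let K be a compact Hausdorff space. Every weak multiplication on C(K) is a weak multiplier. -/
open Filter Topology

/-- A bounded linear operator `T` on `C(K, ℝ)` is a *weak multiplier* if for every bounded
pairwise disjoint sequence `(e_n)` in `C(K, ℝ)` and every sequence `(x_n)` in `K` with
`e_n (x_n) = 0` for all `n`, one has `T (e_n) (x_n) → 0`. -/
def IsWeakMultiplier {K : Type*} [TopologicalSpace K] [CompactSpace K]
    (T : C(K, ℝ) →L[ℝ] C(K, ℝ)) : Prop :=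
  ∀ (e : ℕ → C(K, ℝ)) (x : ℕ → K),
    (∃ M : ℝ, ∀ n, ‖e n‖ ≤ M) →
    (∀ i j, i ≠ j → e i * e j = 0) →
    (∀ n, (e n) (x n) = 0) →
    Filter.Tendsto (fun n => (T (e n)) (x n)) Filter.atTop (nhds 0)

/-- An operator on `C(K, ℝ)` is *weakly compact* if the image of the closed unit ball has
compact closure in the weak topology. -/
def IsWeaklyCompactOp {K : Type*} [TopologicalSpace K] [CompactSpace K]
    (S : C(K, ℝ) →L[ℝ] C(K, ℝ)) : Prop :=
  IsCompact (closure ((toWeakSpace ℝ C(K, ℝ)) '' (S '' Metric.closedBall 0 1)))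

/-- An operator on `C(K, ℝ)` is a *weak multiplication* if it has the form `g•I + S` with
`g ∈ C(K, ℝ)` and `S` weakly compact. -/
def IsWeakMultiplication {K : Type*} [TopologicalSpace K] [CompactSpace K]
    (T : C(K, ℝ) →L[ℝ] C(K, ℝ)) : Prop :=
  ∃ (g : C(K, ℝ)) (S : C(K, ℝ) →L[ℝ] C(K, ℝ)),
    IsWeaklyCompactOp S ∧ T = ContinuousLinearMap.mul ℝ C(K, ℝ) g + S

/-- A subset `A` of a real vector space is *lineable* if `A ∪ {0}` contains an
infinite-dimensional subspace. -/
def Lineable {X : Type*} [AddCommGroup X] [Module ℝ X] (A : Set X) : Prop :=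
  ∃ W : Submodule ℝ X, ¬ FiniteDimensional ℝ W ∧ (W : Set X) ⊆ A ∪ {0}

/-- A subset `A` of a real normed space is *spaceable* if `A ∪ {0}` contains a closed
infinite-dimensional subspace. -/
def Spaceable {X : Type*} [NormedAddCommGroup X] [NormedSpace ℝ X] (A : Set X) : Prop :=
  ∃ W : Submodule ℝ X, IsClosed (W : Set X) ∧ ¬ FiniteDimensional ℝ W ∧ (W : Set X) ⊆ A ∪ {0}

/-! Since `e_n (x_n) = 0`, the multiplication part of `T = g • I + S` contributes nothing, so it
suffices that `S (e_n) (x_n) → 0` for weakly compact `S`. If not, `|S (e_n) (x_n)| ≥ ε` along a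
subsequence. Disjointness gives `∑_n |S (e_n) (z)| ≤ ‖S‖ · sup ‖e_n‖` at every `z`, and the partial
sums of any subsequence of `(e_n)` are bounded by `sup ‖e_n‖`; by weak compactness, the pointwise
sum `∑_j S (e_{n_j})` is then continuous, being a multiple of a weak cluster point of the images of
the partial sums. A gliding hump around a cluster point of `(x_n)` yields a subsequence along which
the other terms are negligible at each `x_{n_k}`, so the sum has size `≥ ε/2` at every `x_{n_k}`
but `≤ ε/4` at any cluster point of `(x_{n_k})`, contradicting continuity. -/

section DisjointFamilies

variable {K : Type*} [TopologicalSpace K] [CompactSpace K]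

lemma norm_sum_smul_le_of_pairwise_mul_eq_zero {ι : Type*} {f : ι → C(K, ℝ)}
    (hdisj : Pairwise fun i j => f i * f j = 0) {M : ℝ} (hM0 : 0 ≤ M) (hM : ∀ i, ‖f i‖ ≤ M)
    {c : ι → ℝ} (hc : ∀ i, |c i| ≤ 1) (F : Finset ι) :
    ‖∑ i ∈ F, c i • f i‖ ≤ M := by
  rw [ContinuousMap.norm_le _ hM0]
  intro z
  simp only [ContinuousMap.coe_sum, ContinuousMap.coe_smul, Finset.sum_apply, Pi.smul_apply,
    smul_eq_mul]
  by_cases hz : ∃ i ∈ F, f i z ≠ 0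
  · obtain ⟨i, hiF, hi⟩ := hz
    have hother : ∀ j ∈ F, j ≠ i → c j * f j z = 0 := fun j _ hji => by
      have hprod : f j z * f i z = 0 := by simpa using congr($(hdisj hji) z)
      rw [(mul_eq_zero.1 hprod).resolve_right hi, mul_zero]
    rw [Finset.sum_eq_single_of_mem i hiF hother, norm_mul]
    calc ‖c i‖ * ‖f i z‖ ≤ 1 * ‖f i‖ :=
          mul_le_mul (hc i) ((f i).norm_coe_le_norm z) (norm_nonneg _) zero_le_one
      _ ≤ M := by rw [one_mul]; exact hM i
  · push Not at hz
    rw [Finset.sum_eq_zero fun i hi => by rw [hz i hi, mul_zero], norm_zero]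
    exact hM0

lemma sum_abs_le_of_pairwise_mul_eq_zero {ι : Type*} {f : ι → C(K, ℝ)}
    (hdisj : Pairwise fun i j => f i * f j = 0) {M : ℝ} (hM0 : 0 ≤ M) (hM : ∀ i, ‖f i‖ ≤ M)
    (φ : C(K, ℝ) →L[ℝ] ℝ) (F : Finset ι) :
    ∑ i ∈ F, |φ (f i)| ≤ ‖φ‖ * M := by
  have hsign : ∀ i, |(SignType.sign (φ (f i)) : ℝ)| ≤ 1 := fun i => by
    rcases SignType.sign (φ (f i)) with _ | _ | _ <;> simp
  calc ∑ i ∈ F, |φ (f i)| = φ (∑ i ∈ F, (SignType.sign (φ (f i)) : ℝ) • f i) := by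
        simp [map_sum, sign_mul_self]
    _ ≤ ‖φ‖ * ‖∑ i ∈ F, (SignType.sign (φ (f i)) : ℝ) • f i‖ :=
        (le_abs_self _).trans (φ.le_opNorm _)
    _ ≤ ‖φ‖ * M := by
        gcongr
        exact norm_sum_smul_le_of_pairwise_mul_eq_zero hdisj hM0 hM hsign F

end DisjointFamilies

section WeaklyCompact

variable {K : Type*} [TopologicalSpace K] [CompactSpace K]

lemma IsWeaklyCompactOp.continuous_of_tendsto {S : C(K, ℝ) →L[ℝ] C(K, ℝ)}
    (hS : IsWeaklyCompactOp S) {u : ℕ → C(K, ℝ)} {r : ℝ} (hu : ∀ N, ‖u N‖ ≤ r) {L : K → ℝ}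
    (hL : ∀ x, Tendsto (fun N => S (u N) x) atTop (𝓝 (L x))) : Continuous L := by
  set c := max r 1
  have hc : 0 < c := lt_max_of_lt_right one_pos
  set v : ℕ → WeakSpace ℝ C(K, ℝ) := fun N => toWeakSpace ℝ C(K, ℝ) (c⁻¹ • S (u N))
  have hv : ∀ N, v N ∈ toWeakSpace ℝ C(K, ℝ) '' (S '' Metric.closedBall 0 1) := fun N => by
    refine ⟨_, ⟨c⁻¹ • u N, ?_, map_smul S _ _⟩, rfl⟩
    rw [mem_closedBall_zero_iff, norm_smul, norm_inv, Real.norm_of_nonneg hc.le,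
      inv_mul_le_iff₀ hc, mul_one]
    exact (hu N).trans (le_max_left r 1)
  obtain ⟨w, -, hw⟩ := hS.exists_mapClusterPt (f := atTop) (u := v)
    (le_principal_iff.2 (mem_map.2 (Eventually.of_forall fun N => subset_closure (hv N))))
  suffices hLw : L = fun x => c * (toWeakSpace ℝ C(K, ℝ)).symm w x by
    rw [hLw]; fun_prop
  funext x
  have hcl : MapClusterPt ((toWeakSpace ℝ C(K, ℝ)).symm w x) atTop
      (fun N => c⁻¹ * S (u N) x) := by
    have := hw.tendsto_comp ((WeakBilin.eval_continuous _ (ContinuousMap.evalCLM ℝ x)).tendsto w)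
    exact this
  have hlim := (hL x).const_mul c⁻¹
  rw [eq_of_nhds_neBot (hcl.neBot.mono (inf_le_inf_left _ hlim)), ← mul_assoc,
    mul_inv_cancel₀ hc.ne', one_mul]

end WeaklyCompact

lemma Summable.eventually_forall_sum_lt {g : ℕ → ℝ} (hg : Summable g) {η : ℝ} (hη : 0 < η) :
    ∀ᶠ N in atTop, ∀ F : Finset ℕ, (∀ m ∈ F, N ≤ m) → ∑ m ∈ F, g m < η := by
  obtain ⟨s, hs⟩ := hg.vanishing (Iio_mem_nhds hη)
  filter_upwards [eventually_gt_atTop (s.sup id)] with N hN F hF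
  exact hs F <| Finset.disjoint_left.2 fun m hmF hms =>
    (hF m hmF).not_gt ((Finset.le_sup (f := id) hms).trans_lt hN)

lemma abs_tsum_le_of_forall_sum_abs_le {ι : Type*} {g : ι → ℝ} {c : ℝ}
    (h : ∀ F : Finset ι, ∑ i ∈ F, |g i| ≤ c) : |∑' i, g i| ≤ c := by
  have hs : Summable fun i => |g i| := summable_of_sum_le (fun i => abs_nonneg _) h
  exact (norm_tsum_le_tsum_norm (f := g) hs).trans (hs.tsum_le_of_sum_le h)

section GlidingHump

variable {K : Type*} [TopologicalSpace K] [CompactSpace K]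

lemma exists_strictMono_offDiag_sum_abs_le (f : ℕ → C(K, ℝ))
    (habs : ∀ z, Summable fun k => |f k z|) (y : ℕ → K) {η : ℝ} (hη : 0 < η) :
    ∃ n : ℕ → ℕ, StrictMono n ∧
      (∀ k (F : Finset ℕ), (∀ j ∈ F, j < k) → ∑ j ∈ F, |f (n j) (y (n k))| ≤ η) ∧
      (∀ k (F : Finset ℕ), (∀ j ∈ F, k < j) → ∑ j ∈ F, |f (n j) (y (n k))| ≤ η) := by
  obtain ⟨xs, hxs⟩ : ∃ xs, MapClusterPt xs atTop y := exists_clusterPt_of_compactSpace _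
  set δ : ℕ → ℝ := fun a => η / 4 * (1 / 2) ^ a
  have hδ : Summable δ := summable_geometric_two.mul_left _
  have hδsum : ∑' a, δ a = η / 2 := by
    simp only [δ, tsum_mul_left, tsum_geometric_two]; ring
  obtain ⟨N₀, hN₀⟩ := ((habs xs).eventually_forall_sum_lt (half_pos hη)).exists
  -- `y b` is taken near `xs`, where the terms beyond `N₀` are small, for all earlier indices `a`,
  -- and `b` beyond the tails of the series at the earlier points `y a`.
  obtain ⟨n, hN₀n, hn⟩ := exists_seq_of_forall_finset_exists (fun a => N₀ ≤ a)
    (fun a b => a < b ∧ |f a (y b) - f a xs| < δ a ∧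
      ∀ F : Finset ℕ, (∀ m ∈ F, b ≤ m) → ∑ m ∈ F, |f m (y a)| < η) fun s _ => by
    have hnear : ∀ᶠ z in 𝓝 xs, ∀ a ∈ s, |f a z - f a xs| < δ a :=
      (Finset.eventually_all s).2 fun a _ => by
        simpa only [Real.dist_eq] using
          Metric.tendsto_nhds.1 ((f a).continuous.tendsto xs) (δ a) (by positivity)
    have hlarge : ∀ᶠ b in atTop, N₀ ≤ b ∧ ∀ a ∈ s, a < b ∧
        ∀ F : Finset ℕ, (∀ m ∈ F, b ≤ m) → ∑ m ∈ F, |f m (y a)| < η :=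
      (eventually_ge_atTop N₀).and <| (Finset.eventually_all s).2 fun a _ =>
        (eventually_gt_atTop a).and ((habs (y a)).eventually_forall_sum_lt hη)
    obtain ⟨b, hb_near, hb_N₀, hb⟩ := ((hxs.frequently hnear).and_eventually hlarge).exists
    exact ⟨b, hb_N₀, fun a ha => ⟨(hb a ha).1, hb_near a ha, (hb a ha).2⟩⟩
  have hmono : StrictMono n := fun a b hab => (hn a b hab).1
  refine ⟨n, hmono, fun k F hF => ?_, fun k F hF => ?_⟩
  · calc ∑ j ∈ F, |f (n j) (y (n k))| ≤ ∑ j ∈ F, (|f (n j) xs| + δ (n j)) :=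
          Finset.sum_le_sum fun j hj => by
            have := abs_sub_abs_le_abs_sub (f (n j) (y (n k))) (f (n j) xs)
            have := (hn j k (hF j hj)).2.1
            linarith
      _ = ∑ m ∈ F.image n, |f m xs| + ∑ m ∈ F.image n, δ m := by
          rw [Finset.sum_add_distrib, Finset.sum_image hmono.injective.injOn,
            Finset.sum_image hmono.injective.injOn]
      _ ≤ η / 2 + η / 2 := by
          gcongr
          · exact (hN₀ _ (by simpa using fun j _ => hN₀n j)).le
          · exact hδsum ▸ hδ.sum_le_tsum _ fun _ _ => by positivity
      _ = η := add_halves η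
  · have := (hn k (k + 1) (lt_add_one k)).2.2 (F.image n) (by
      simpa using fun j hj => hmono.monotone (hF j hj))
    rw [Finset.sum_image hmono.injective.injOn] at this
    exact this.le

lemma exists_strictMono_not_continuous_tsum (f : ℕ → C(K, ℝ))
    (habs : ∀ z, Summable fun k => |f k z|) (y : ℕ → K) {ε : ℝ} (hε : 0 < ε)
    (hy : ∀ k, ε ≤ |f k (y k)|) :
    ∃ n : ℕ → ℕ, StrictMono n ∧ ¬ Continuous fun z => ∑' j, f (n j) z := by
  obtain ⟨n, hmono, hbefore, hafter⟩ :=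
    exists_strictMono_offDiag_sum_abs_le f habs y (show 0 < ε / 4 by positivity)
  refine ⟨n, hmono, fun hG => ?_⟩
  set G := fun z => ∑' j, f (n j) z
  have hhump : ∀ k, ε / 2 ≤ |G (y (n k))| := by
    intro k
    set z := y (n k)
    have hsplit := (((habs z).comp_injective hmono.injective).of_abs).sum_add_tsum_nat_add (k + 1)
    rw [Finset.sum_range_succ] at hsplit
    have hpast : |∑ j ∈ Finset.range k, f (n j) z| ≤ ε / 4 :=
      (Finset.abs_sum_le_sum_abs _ _).trans (hbefore k _ fun j hj => Finset.mem_range.1 hj)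
    have hfuture : |∑' j, f (n (j + (k + 1))) z| ≤ ε / 4 :=
      abs_tsum_le_of_forall_sum_abs_le fun F => by
        have := hafter k (F.map (addRightEmbedding (k + 1)))
          (by simp only [Finset.mem_map, addRightEmbedding_apply]; rintro _ ⟨j, -, rfl⟩; omega)
        rwa [Finset.sum_map] at this
    have hpresent : f (n k) z = G z - ∑ j ∈ Finset.range k, f (n j) z -
        ∑' j, f (n (j + (k + 1))) z := by
      simp only [G, ← hsplit]; ring
    have hpeak := hy (n k)
    rw [hpresent] at hpeak
    linarith [abs_sub (G z - ∑ j ∈ Finset.range k, f (n j) z) (∑' j, f (n (j + (k + 1))) z),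
      abs_sub (G z) (∑ j ∈ Finset.range k, f (n j) z)]
  obtain ⟨xss, hxss⟩ : ∃ xss, MapClusterPt xss atTop (y ∘ n) :=
    exists_clusterPt_of_compactSpace _
  have hlow : ε / 2 ≤ |G xss| :=
    (isClosed_le continuous_const hG.abs).mem_of_mapClusterPt hxss (Eventually.of_forall hhump)
  have hup : |G xss| ≤ ε / 4 := abs_tsum_le_of_forall_sum_abs_le fun F =>
    (isClosed_le (continuous_finsetSum _ fun j _ => (f (n j)).continuous.abs)
      continuous_const).mem_of_mapClusterPt hxss ((eventually_gt_atTop (F.sup id)).mono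
        fun k hk => hbefore k F fun j hj => (Finset.le_sup (f := id) hj).trans_lt hk)
  linarith

end GlidingHump

lemma IsWeaklyCompactOp.tendsto_apply_of_pairwise_mul_eq_zero {K : Type*} [TopologicalSpace K]
    [CompactSpace K] {S : C(K, ℝ) →L[ℝ] C(K, ℝ)} (hS : IsWeaklyCompactOp S)
    {e : ℕ → C(K, ℝ)} {M : ℝ} (hM : ∀ n, ‖e n‖ ≤ M) (hdisj : Pairwise fun i j => e i * e j = 0)
    (x : ℕ → K) : Tendsto (fun n => S (e n) (x n)) atTop (𝓝 0) := by
  by_contra hnot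
  obtain ⟨s, hs, hfreq⟩ := not_tendsto_iff_exists_frequently_notMem.1 hnot
  obtain ⟨ε, hε, hball⟩ := Metric.mem_nhds_iff.1 hs
  obtain ⟨φ, hφ, hεφ⟩ := extraction_of_frequently_atTop <|
    hfreq.mono fun n hn => (by simpa using mt (@hball _) hn : ε ≤ |S (e n) (x n)|)
  have hM0 : 0 ≤ M := (norm_nonneg _).trans (hM 0)
  have hdisjφ : ∀ {ψ : ℕ → ℕ}, StrictMono ψ → Pairwise fun i j => e (ψ i) * e (ψ j) = 0 :=
    fun hψ _ _ hij => hdisj (hψ.injective.ne hij)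
  have habs : ∀ z, Summable fun k => |S (e (φ k)) z| := fun z =>
    summable_of_sum_le (fun _ => abs_nonneg _) (sum_abs_le_of_pairwise_mul_eq_zero (hdisjφ hφ)
      hM0 (fun _ => hM _) ((ContinuousMap.evalCLM ℝ z).comp S))
  obtain ⟨n, hn, hG⟩ :=
    exists_strictMono_not_continuous_tsum (fun k => S (e (φ k))) habs (x ∘ φ) hε hεφ
  refine hG (hS.continuous_of_tendsto (u := fun N => ∑ j ∈ Finset.range N, e (φ (n j))) (r := M)
    (fun N => ?_) fun z => ?_)
  · simpa using norm_sum_smul_le_of_pairwise_mul_eq_zero (hdisjφ (hφ.comp hn)) hM0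
      (fun _ => hM _) (c := fun _ => 1) (by simp) (Finset.range N)
  · simpa [map_sum] using (((habs z).comp_injective hn.injective).of_abs).hasSum.tendsto_sum_nat

theorem isWeakMultiplier_of_isWeakMultiplication_general
    {K : Type*} [TopologicalSpace K] [CompactSpace K]
    (T : C(K, ℝ) →L[ℝ] C(K, ℝ)) (hT : IsWeakMultiplication T) :
    IsWeakMultiplier T := by
  obtain ⟨g, S, hS, rfl⟩ := hT
  rintro e x ⟨M, hM⟩ hdisj hzero
  refine (hS.tendsto_apply_of_pairwise_mul_eq_zero hM (fun i j hij => hdisj i j hij) x).congr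
    fun n => ?_
  simp [hzero n]

/-- Every weak multiplication on `C(K, ℝ)` is a weak multiplier. -/
theorem isWeakMultiplier_of_isWeakMultiplication
    {K : Type*} [TopologicalSpace K] [CompactSpace K] [T2Space K]
    (T : C(K, ℝ) →L[ℝ] C(K, ℝ)) (hT : IsWeakMultiplication T) :
    IsWeakMultiplier T :=
  isWeakMultiplier_of_isWeakMultiplication_general T hT
end

section
/- Let K be a compact Hausdorff space. The set M(C(K)) of all weak multipliers on C(K) is closed in the Banach space L(C(K)) of bounded linear operators on C(K) with the operator norm. -/
open Filter Topology

/-- The set of weak multipliers is closed in `L(C(K,ℝ))`. -/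
theorem isClosed_weakMultipliers
    {K : Type*} [TopologicalSpace K] [CompactSpace K] [T2Space K] :
    IsClosed {T : C(K, ℝ) →L[ℝ] C(K, ℝ) | IsWeakMultiplier T} := by
  rw [← closure_subset_iff_isClosed]
  intro T hT
  intro e x hbdd hdisj hzero
  obtain ⟨M, hM⟩ := hbdd
  have hM0 : (0 : ℝ) ≤ M := le_trans (norm_nonneg _) (hM 0)
  rw [NormedAddCommGroup.tendsto_nhds_zero]
  intro ε hε
  obtain ⟨S, hS, hTS⟩ := (SeminormedAddCommGroup.mem_closure_iff (E := C(K, ℝ) →L[ℝ] C(K, ℝ))).1 hT (ε / (2 * (M + 1))) (by positivity)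
  have hStend := hS e x ⟨M, hM⟩ hdisj hzero
  rw [NormedAddCommGroup.tendsto_nhds_zero] at hStend
  filter_upwards [hStend (ε / 2) (by positivity)] with n hn
  have h1 : ‖(T (e n)) (x n) - (S (e n)) (x n)‖ ≤ ‖T - S‖ * M := by
    have : (T (e n)) (x n) - (S (e n)) (x n) = ((T - S) (e n)) (x n) := by simp
    rw [this]
    calc ‖((T - S) (e n)) (x n)‖ ≤ ‖(T - S) (e n)‖ :=
          ContinuousMap.norm_coe_le_norm _ _
      _ ≤ ‖T - S‖ * ‖e n‖ := (T - S).le_opNorm _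
      _ ≤ ‖T - S‖ * M := by
          exact mul_le_mul_of_nonneg_left (hM n) (norm_nonneg (T - S))
  have h2 : ‖T - S‖ * M ≤ ε / (2 * (M + 1)) * M := by
    apply mul_le_mul_of_nonneg_right _ hM0
    exact le_of_lt hTS
  have h3 : ε / (2 * (M + 1)) * M ≤ ε / 2 := by
    rw [div_mul_eq_mul_div, div_le_div_iff₀ (by positivity) (by norm_num)]
    ring_nf
    nlinarith
  calc ‖(T (e n)) (x n)‖
      ≤ ‖(T (e n)) (x n) - (S (e n)) (x n)‖ + ‖(S (e n)) (x n)‖ := by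
        simpa using norm_add_le ((T (e n)) (x n) - (S (e n)) (x n)) ((S (e n)) (x n))
    _ < ε / 2 + ε / 2 := by
        apply add_lt_add_of_le_of_lt _ hn
        exact le_trans h1 (le_trans h2 h3)
    _ = ε := by ring
end

section
/- Let X be a real vector space and M a linear subspace of X. Then X∖M is lineable if and only if the quotient vector space X/M is infinite-dimensional. -/
open Filter Topology

/-- For a subspace `M` of a real vector space `X`, the complement `X ∖ M` is lineable iff
the quotient `X ⧸ M` is infinite-dimensional. -/
theorem lineable_compl_iff_quotient_infiniteDimensional
    {X : Type*} [AddCommGroup X] [Module ℝ X] (M : Submodule ℝ X) :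
    Lineable ((M : Set X)ᶜ) ↔ ¬ FiniteDimensional ℝ (X ⧸ M) := by
  constructor
  · rintro ⟨W, hW, hsub⟩ hfd
    apply hW
    have hinj : Function.Injective (M.mkQ.comp W.subtype) := by
      rw [← LinearMap.ker_eq_bot]
      ext ⟨x, hx⟩
      simp only [LinearMap.mem_ker, LinearMap.comp_apply, Submodule.subtype_apply,
        Submodule.mkQ_apply, Submodule.Quotient.mk_eq_zero, Submodule.mem_bot,
        Submodule.mk_eq_zero]
      constructor
      · intro hxM
        rcases hsub hx with h | h
        · exact absurd hxM h
        · exact h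
      · rintro rfl; exact M.zero_mem
    exact FiniteDimensional.of_injective (M.mkQ.comp W.subtype) hinj
  · intro h
    obtain ⟨W, hW⟩ := Submodule.exists_isCompl M
    refine ⟨W, fun hfd => h ?_, fun x hx => ?_⟩
    · exact Module.Finite.equiv (Submodule.quotientEquivOfIsCompl M W hW).symm
    · by_cases hx0 : x = 0
      · exact Or.inr hx0
      · refine Or.inl fun hxM => hx0 ?_
        have : x ∈ M ⊓ W := ⟨hxM, hx⟩
        rwa [hW.inf_eq_bot, Submodule.mem_bot] at this
end

section
/- Let X be a real Banach space and M a closed linear subspace of X. Then X∖M is spaceable if and only if the quotient space X/M is infinite-dimensional. -/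
open Filter Topology

open Finset Submodule

/-! If `X ⧸ M` is finite-dimensional, a subspace meeting `M` only in `0` embeds into `X ⧸ M`.
Conversely, applying Mazur's lemma in `X` and in `X ⧸ M` at once yields `xₙ ∉ M` such that both
`(xₙ)` and its image `(x̄ₙ)` in `X ⧸ M` are basic sequences. Let `w ∈ M` lie in the closed span of
`(xₙ)`, the limit of finite combinations `uₖ`. The images `ūₖ` tend to `0`, so, `(x̄ₙ)` being
basic, every coefficient of `uₖ` tends to `0`; as `(xₙ)` is basic, `‖uₖ‖ ≤ 2 ‖uₖ - w‖`, and
hence `w = 0`. -/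

theorem Submodule.exists_notMem_forall_apply_eq_zero {K V ι : Type*} [Field K] [AddCommGroup V]
    [Module K V] [Finite ι] {M : Submodule K V} (hM : ¬FiniteDimensional K (V ⧸ M))
    (f : ι → V →ₗ[K] K) : ∃ y ∉ M, ∀ i, f i y = 0 := by
  by_contra! h
  let L := LinearMap.pi f
  have hLM : LinearMap.ker L ≤ M := fun y hy => by
    by_contra hyM
    obtain ⟨i, hi⟩ := h y hyM
    exact hi (congrFun (LinearMap.mem_ker.1 hy) i)
  have : FiniteDimensional K (V ⧸ LinearMap.ker L) := .equiv L.quotKerEquivRange.symm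
  exact hM (.of_surjective _ (Submodule.factor_surjective hLM))

theorem Submodule.finiteDimensional_of_disjoint {K V : Type*} [Field K] [AddCommGroup V]
    [Module K V] {W M : Submodule K V} [FiniteDimensional K (V ⧸ M)] (h : Disjoint W M) :
    FiniteDimensional K W :=
  .of_injective (M.mkQ ∘ₗ W.subtype) <| by
    rwa [← LinearMap.ker_eq_bot, LinearMap.ker_comp, ker_mkQ, ← disjoint_iff_comap_eq_bot]

theorem Submodule.coe_subset_compl_union_zero_iff_disjoint {R V : Type*} [Semiring R]
    [AddCommMonoid V] [Module R V] {W M : Submodule R V} :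
    (W : Set V) ⊆ (M : Set V)ᶜ ∪ {0} ↔ Disjoint W M := by
  simp only [disjoint_def, Set.subset_def, Set.mem_union, Set.mem_compl_iff,
    Set.mem_singleton_iff, SetLike.mem_coe, or_iff_not_imp_left, not_not]

theorem exists_seq_forall_image_range {α : Type*} [DecidableEq α] (P : ℕ → Finset α → α → Prop)
    (h : ∀ n s, ∃ y, P n s y) : ∃ x : ℕ → α, ∀ n, P n ((range n).image x) (x n) := by
  choose g hg using h
  let T : ℕ → Finset α := fun n => Nat.rec ∅ (fun n s => insert (g n s) s) n
  have hT : ∀ n, T n = (range n).image (fun k => g k (T k)) := by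
    intro n
    induction n with
    | zero => rfl
    | succ n ih => rw [range_add_one, image_insert, ← ih]
  exact ⟨fun n => g n (T n), fun n => hT n ▸ hg n (T n)⟩

theorem Finsupp.eventually_sum_range_eq_sum {R M : Type*} [Semiring R] [AddCommMonoid M]
    [Module R M] (l : ℕ →₀ R) (v : ℕ → M) :
    ∀ᶠ n in atTop, ∑ i ∈ range n, l i • v i = l.sum fun i a => a • v i := by
  obtain ⟨N, hN⟩ := exists_nat_subset_range l.support
  filter_upwards [eventually_ge_atTop N] with n hn
  exact (l.sum_of_support_subset (hN.trans (range_mono hn)) (fun i a => a • v i)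
    fun i _ => zero_smul R (v i)).symm

/-- Mazur's lemma; the functionals norm finitely many points covering the unit sphere of `E`. -/
theorem Submodule.exists_finset_strongDual_norm_le_mul_norm_add {Y : Type*}
    [NormedAddCommGroup Y] [NormedSpace ℝ Y] (E : Submodule ℝ Y) [FiniteDimensional ℝ E]
    {r : ℝ} (hr : 1 < r) :
    ∃ F : Finset (StrongDual ℝ Y), ∀ e ∈ E, ∀ x, (∀ f ∈ F, f x = 0) → ‖e‖ ≤ r * ‖e + x‖ := by
  classical
  choose g hg_norm hg_apply using fun y : Y => exists_dual_vector'' ℝ y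
  obtain ⟨t, -, ht_cover⟩ := (isCompact_sphere (0 : E) 1).elim_nhds_subcover
    (fun s => {e : E | 1 < r * g s e}) fun s hs => by
      refine (isOpen_lt continuous_const (by fun_prop)).mem_nhds ?_
      simpa [hg_apply, ← Submodule.coe_norm, mem_sphere_zero_iff_norm.1 hs] using hr
  refine ⟨t.image (fun s : E => g s), fun e he x hx => ?_⟩
  obtain rfl | he0 := eq_or_ne e 0
  · simpa using mul_nonneg (zero_le_one.trans hr.le) (norm_nonneg x)
  set e' : E := ⟨e, he⟩
  have he'0 : e' ≠ 0 := by simpa [e'] using he0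
  obtain ⟨s, hst, hs⟩ := Set.mem_iUnion₂.1 <| ht_cover <|
    mem_sphere_zero_iff_norm.2 (norm_smul_inv_norm (𝕜 := ℝ) he'0)
  have hgs : g s x = 0 := hx _ (mem_image_of_mem _ hst)
  have hnorm : ‖e‖ < r * g s e := by
    have : 1 < r * (‖e‖⁻¹ * g s e) := by simpa [e'] using hs
    rwa [mul_left_comm, inv_mul_eq_div, one_lt_div (norm_pos_iff.2 he0)] at this
  calc ‖e‖ ≤ r * g s (e + x) := by rw [map_add, hgs, add_zero]; exact hnorm.le
    _ ≤ r * ‖e + x‖ := by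
      gcongr
      exact (le_abs_self _).trans ((g s).le_of_opNorm_le (hg_norm s) _) |>.trans (by rw [one_mul])

theorem Submodule.exists_notMem_norm_le_mul_norm_add_smul {X : Type*} [NormedAddCommGroup X]
    [NormedSpace ℝ X] {M : Submodule ℝ X} [IsClosed (M : Set X)]
    (hM : ¬FiniteDimensional ℝ (X ⧸ M)) (E : Submodule ℝ X) [FiniteDimensional ℝ E]
    {r : ℝ} (hr : 1 < r) :
    ∃ y ∉ M, ∀ e ∈ E, ∀ c : ℝ,
      ‖e‖ ≤ r * ‖e + c • y‖ ∧ ‖M.mkQ e‖ ≤ r * ‖M.mkQ e + c • M.mkQ y‖ := by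
  classical
  obtain ⟨F₁, hF₁⟩ := E.exists_finset_strongDual_norm_le_mul_norm_add hr
  obtain ⟨F₂, hF₂⟩ := (E.map M.mkQ).exists_finset_strongDual_norm_le_mul_norm_add hr
  obtain ⟨y, hyM, hy⟩ := exists_notMem_forall_apply_eq_zero hM
    (fun f : ↥(F₁ ∪ F₂.image (·.comp M.mkQL)) => (f : StrongDual ℝ X).toLinearMap)
  have hy₁ : ∀ f ∈ F₁, f y = 0 := fun f hf => by simpa using hy ⟨f, mem_union_left _ hf⟩
  have hy₂ : ∀ f ∈ F₂, f (M.mkQ y) = 0 := fun f hf => by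
    simpa using hy ⟨f.comp M.mkQL, mem_union_right _ (mem_image_of_mem _ hf)⟩
  exact ⟨y, hyM, fun e he c => ⟨hF₁ e he _ fun f hf => by rw [map_smul, hy₁ f hf, smul_zero],
    hF₂ _ (mem_map_of_mem he) _ fun f hf => by rw [map_smul, hy₂ f hf, smul_zero]⟩⟩

section IsBasicWith

variable {Y : Type*} [NormedAddCommGroup Y] [NormedSpace ℝ Y] {K : ℝ} {v : ℕ → Y}

/-- Grünblum's condition: the sequence is basic with basis constant at most `K`, except that
its terms may vanish. -/
def IsBasicWith (K : ℝ) (v : ℕ → Y) : Prop :=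
  ∀ (c : ℕ → ℝ) {m n : ℕ}, m ≤ n → ‖∑ i ∈ range m, c i • v i‖ ≤ K * ‖∑ i ∈ range n, c i • v i‖

theorem isBasicWith_of_le_mul {a : ℕ → ℝ} (ha : ∀ n, 1 ≤ a n) (haK : ∀ n, a n ≤ K)
    (h : ∀ n (c : ℕ → ℝ), a n * ‖∑ i ∈ range n, c i • v i‖ ≤
      a (n + 1) * ‖∑ i ∈ range (n + 1), c i • v i‖) :
    IsBasicWith K v := fun c m n hmn =>
  calc ‖∑ i ∈ range m, c i • v i‖ ≤ a m * ‖∑ i ∈ range m, c i • v i‖ :=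
        le_mul_of_one_le_left (norm_nonneg _) (ha m)
    _ ≤ a n * ‖∑ i ∈ range n, c i • v i‖ := monotone_nat_of_le_succ (fun k => h k c) hmn
    _ ≤ K * ‖∑ i ∈ range n, c i • v i‖ := mul_le_mul_of_nonneg_right (haK n) (norm_nonneg _)

theorem IsBasicWith.abs_mul_norm_le (hv : IsBasicWith K v) {c : ℕ → ℝ} {u : Y}
    (hc : ∀ᶠ n in atTop, ∑ i ∈ range n, c i • v i = u) (i : ℕ) :
    |c i| * ‖v i‖ ≤ 2 * K * ‖u‖ := by
  obtain ⟨n, hin, rfl⟩ := ((eventually_ge_atTop (i + 1)).and hc).exists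
  calc |c i| * ‖v i‖
      = ‖∑ j ∈ range (i + 1), c j • v j - ∑ j ∈ range i, c j • v j‖ := by
        rw [sum_range_succ, add_sub_cancel_left, norm_smul, Real.norm_eq_abs]
    _ ≤ ‖∑ j ∈ range (i + 1), c j • v j‖ + ‖∑ j ∈ range i, c j • v j‖ := norm_sub_le _ _
    _ ≤ K * ‖∑ j ∈ range n, c j • v j‖ + K * ‖∑ j ∈ range n, c j • v j‖ :=
        add_le_add (hv c hin) (hv c (by omega))
    _ = 2 * K * ‖∑ j ∈ range n, c j • v j‖ := by ring

theorem IsBasicWith.linearIndependent (hv : IsBasicWith K v) (hv0 : ∀ i, v i ≠ 0) :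
    LinearIndependent ℝ v := by
  refine linearIndependent_iff.2 fun l hl => Finsupp.ext fun i => ?_
  have := hv.abs_mul_norm_le ((l.eventually_sum_range_eq_sum v).mono fun n hn =>
    hn.trans ((Finsupp.linearCombination_apply ℝ l).symm.trans hl)) i
  rw [norm_zero, mul_zero] at this
  simpa using nonpos_of_mul_nonpos_left this (norm_pos_iff.2 (hv0 i))

theorem IsBasicWith.tendsto_coeff_zero (hv : IsBasicWith K v) (hv0 : ∀ i, v i ≠ 0)
    {u : ℕ → Y} {c : ℕ → ℕ → ℝ} (hc : ∀ k, ∀ᶠ n in atTop, ∑ i ∈ range n, c k i • v i = u k)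
    (hu : Tendsto u atTop (𝓝 0)) (i : ℕ) : Tendsto (fun k => c k i) atTop (𝓝 0) := by
  have hvi : 0 < ‖v i‖ := norm_pos_iff.2 (hv0 i)
  refine squeeze_zero_norm (fun k => ?_) (by simpa using hu.norm.const_mul (2 * K / ‖v i‖))
  rw [Real.norm_eq_abs, div_mul_eq_mul_div, le_div_iff₀ hvi]
  exact hv.abs_mul_norm_le (hc k) i

theorem IsBasicWith.eq_zero_of_tendsto_coeff (hv : IsBasicWith K v) {u : ℕ → Y}
    {c : ℕ → ℕ → ℝ} {w : Y} (hc : ∀ k, ∀ᶠ n in atTop, ∑ i ∈ range n, c k i • v i = u k)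
    (hu : Tendsto u atTop (𝓝 w)) (hc0 : ∀ i, Tendsto (fun k => c k i) atTop (𝓝 0)) :
    w = 0 := by
  have hpartial : ∀ m, Tendsto (fun l => ∑ i ∈ range m, c l i • v i) atTop (𝓝 0) := fun m => by
    simpa using tendsto_finsetSum (range m) fun i _ => (hc0 i).smul_const (v i)
  have hsub : ∀ k l p, ∑ i ∈ range p, (c k i - c l i) • v i =
      ∑ i ∈ range p, c k i • v i - ∑ i ∈ range p, c l i • v i := fun k l p => by
    simp only [sub_smul, sum_sub_distrib]
  have hbound : ∀ k, ‖u k‖ ≤ K * ‖u k - w‖ := by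
    intro k
    obtain ⟨m, hm⟩ := (hc k).exists
    -- Compare the `m`-th partial sums of the coefficients of `u k` and of `u l`, `l → ∞`.
    have hle : ∀ l, ‖u k‖ ≤ K * ‖u k - u l‖ + ‖∑ i ∈ range m, c l i • v i‖ := by
      intro l
      obtain ⟨n, hmn, hnk, hnl⟩ := ((eventually_ge_atTop m).and ((hc k).and (hc l))).exists
      calc ‖u k‖
          = ‖∑ i ∈ range m, (c k i - c l i) • v i + ∑ i ∈ range m, c l i • v i‖ := by
            rw [hsub, sub_add_cancel, hm]
        _ ≤ K * ‖∑ i ∈ range n, (c k i - c l i) • v i‖ + ‖∑ i ∈ range m, c l i • v i‖ :=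
            (norm_add_le _ _).trans (add_le_add (hv _ hmn) le_rfl)
        _ = K * ‖u k - u l‖ + ‖∑ i ∈ range m, c l i • v i‖ := by rw [hsub, hnk, hnl]
    refine ge_of_tendsto' (x := atTop) ?_ hle
    simpa using ((tendsto_const_nhds.sub hu).norm.const_mul K).add (hpartial m).norm
  have hdist : Tendsto (fun k => ‖u k - w‖) atTop (𝓝 0) := tendsto_iff_norm_sub_tendsto_zero.1 hu
  refine norm_le_zero_iff.1 (ge_of_tendsto' (by simpa using hdist.const_mul (K + 1)) fun k => ?_)
  linarith [norm_le_norm_add_norm_sub' w (u k), norm_sub_rev w (u k), hbound k]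

theorem IsBasicWith.eq_zero_of_mem_closure_span {Z : Type*} [NormedAddCommGroup Z]
    [NormedSpace ℝ Z] {K' : ℝ} {T : Y →L[ℝ] Z} (hv : IsBasicWith K v)
    (hTv : IsBasicWith K' fun i => T (v i)) (hTv0 : ∀ i, T (v i) ≠ 0) {w : Y}
    (hw : w ∈ closure (span ℝ (Set.range v) : Set Y)) (hTw : T w = 0) : w = 0 := by
  obtain ⟨u, hu_mem, hu⟩ := mem_closure_iff_seq_limit.1 hw
  choose l hl using fun k => Finsupp.mem_span_range_iff_exists_finsupp.1 (hu_mem k)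
  have hc : ∀ k, ∀ᶠ n in atTop, ∑ i ∈ range n, l k i • v i = u k := fun k =>
    ((l k).eventually_sum_range_eq_sum v).mono fun n hn => hn.trans (hl k)
  have hTc : ∀ k, ∀ᶠ n in atTop, ∑ i ∈ range n, l k i • T (v i) = T (u k) := fun k =>
    (hc k).mono fun n hn => by simp only [← hn, map_sum, map_smul]
  have hTu : Tendsto (fun k => T (u k)) atTop (𝓝 0) := hTw ▸ (T.continuous.tendsto w).comp hu
  exact hv.eq_zero_of_tendsto_coeff hc hu (hTv.tendsto_coeff_zero hTv0 hTc hTu)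

end IsBasicWith

theorem Submodule.exists_seq_notMem_isBasicWith_two {X : Type*} [NormedAddCommGroup X]
    [NormedSpace ℝ X] {M : Submodule ℝ X} [IsClosed (M : Set X)]
    (hM : ¬FiniteDimensional ℝ (X ⧸ M)) :
    ∃ x : ℕ → X, (∀ n, x n ∉ M) ∧ IsBasicWith 2 x ∧ IsBasicWith 2 fun n => M.mkQ (x n) := by
  classical
  -- Each step costs a Mazur constant `a (n + 1) / a n`; these telescope to at most `2`.
  set a : ℕ → ℝ := fun n => 2 - 2⁻¹ ^ n
  have ha_one : ∀ n, 1 ≤ a n := fun n => by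
    have : (2⁻¹ : ℝ) ^ n ≤ 1 := pow_le_one₀ (by norm_num) (by norm_num)
    simp only [a]; linarith
  have ha_pos : ∀ n, 0 < a n := fun n => zero_lt_one.trans_le (ha_one n)
  have ha_two : ∀ n, a n ≤ 2 := fun n => by
    simp only [a]; linarith [pow_pos (by norm_num : (0 : ℝ) < 2⁻¹) n]
  have ha_lt : ∀ n, a n < a (n + 1) := fun n => by
    have := pow_lt_pow_right_of_lt_one₀ (by norm_num : (0 : ℝ) < 2⁻¹) (by norm_num)
      (Nat.lt_add_one n)
    simp only [a]; linarith
  obtain ⟨x, hx⟩ := exists_seq_forall_image_range (fun n s y => y ∉ M ∧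
      ∀ e ∈ span ℝ (s : Set X), ∀ c : ℝ, a n * ‖e‖ ≤ a (n + 1) * ‖e + c • y‖ ∧
        a n * ‖M.mkQ e‖ ≤ a (n + 1) * ‖M.mkQ e + c • M.mkQ y‖) fun n s => by
    obtain ⟨y, hyM, hy⟩ := exists_notMem_norm_le_mul_norm_add_smul hM (span ℝ (s : Set X))
      ((one_lt_div (ha_pos n)).2 (ha_lt n))
    have hscale : ∀ p q : ℝ, p ≤ a (n + 1) / a n * q → a n * p ≤ a (n + 1) * q := fun p q h => by
      rwa [div_mul_eq_mul_div, le_div_iff₀ (ha_pos n), mul_comm] at h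
    exact ⟨y, hyM, fun e he c => ⟨hscale _ _ (hy e he c).1, hscale _ _ (hy e he c).2⟩⟩
  have hsum_mem : ∀ n (c : ℕ → ℝ),
      ∑ i ∈ range n, c i • x i ∈ span ℝ ((range n).image x : Set X) := fun n c =>
    sum_mem fun i hi => smul_mem _ _ (subset_span (mem_coe.2 (mem_image_of_mem x hi)))
  refine ⟨x, fun n => (hx n).1, isBasicWith_of_le_mul ha_one ha_two fun n c => ?_,
    isBasicWith_of_le_mul ha_one ha_two fun n c => ?_⟩
  · rw [sum_range_succ]
    exact ((hx n).2 _ (hsum_mem n c) (c n)).1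
  · simpa only [sum_range_succ, map_sum, map_smul] using ((hx n).2 _ (hsum_mem n c) (c n)).2

theorem spaceable_compl_iff_quotient_infiniteDimensional_general
    {X : Type*} [NormedAddCommGroup X] [NormedSpace ℝ X]
    (M : Submodule ℝ X) (hM : IsClosed (M : Set X)) :
    Spaceable ((M : Set X)ᶜ) ↔ ¬ FiniteDimensional ℝ (X ⧸ M) := by
  have : IsClosed (M : Set X) := hM
  simp only [Spaceable, coe_subset_compl_union_zero_iff_disjoint]
  constructor
  · rintro ⟨W, -, hW, hWM⟩ hfin
    exact hW (finiteDimensional_of_disjoint hWM)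
  · intro hfin
    obtain ⟨x, hxM, hx, hQx⟩ := exists_seq_notMem_isBasicWith_two hfin
    have hx0 : ∀ n, x n ≠ 0 := fun n h => hxM n (h ▸ M.zero_mem)
    set W := (span ℝ (Set.range x)).topologicalClosure
    have hxW : ∀ n, x n ∈ W := fun n => le_topologicalClosure _ (subset_span ⟨n, rfl⟩)
    refine ⟨W, isClosed_topologicalClosure _, fun hW => ?_, disjoint_def.2 fun w hw hwM => ?_⟩
    · exact Module.Finite.not_linearIndependent_of_infinite (fun n => (⟨x n, hxW n⟩ : W))
        (.of_comp W.subtype (hx.linearIndependent hx0))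
    · exact hx.eq_zero_of_mem_closure_span (T := M.mkQL) hQx (fun n => by simpa using hxM n) hw
        (by simpa using hwM)

/-- For a closed subspace `M` of a real Banach space `X`, the complement `X ∖ M` is spaceable
iff the quotient `X ⧸ M` is infinite-dimensional. -/
theorem spaceable_compl_iff_quotient_infiniteDimensional
    {X : Type*} [NormedAddCommGroup X] [NormedSpace ℝ X] [CompleteSpace X]
    (M : Submodule ℝ X) (hM : IsClosed (M : Set X)) :
    Spaceable ((M : Set X)ᶜ) ↔ ¬ FiniteDimensional ℝ (X ⧸ M) :=
  spaceable_compl_iff_quotient_infiniteDimensional_general M hM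
end

section
/- Let K be a compact Hausdorff space which has a non-trivial convergent sequence, that is, a sequence (x_k) of pairwise distinct points of K converging to some point of K. Then the set NM(C(K)) of bounded linear operators on C(K) that are not weak multipliers is spaceable in L(C(K)). -/
open Filter Topology

/-!
Pass to a tail `y` of the sequence that avoids its limit `p`. The points `y n` then have pairwise
disjoint open neighbourhoods, hence Urysohn bumps `g n` with `g n (y n) = 1` and pairwise disjoint
supports. For `b ∈ ℓ∞` put `Φ b e = ∑ n, (b n.unpair.1 * (e (y (n + 1)) - e (y n))) • g n`: the
coefficients tend to zero, so the series converges, and `‖b‖ ≤ ‖Φ b‖`, so the range of `Φ` is a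
closed infinite-dimensional subspace. Finally `Φ b (g (m + 1)) (y m) = b m.unpair.1` although
`g (m + 1)` vanishes at `y m`; along `m = Nat.pair i k` this value is the constant `b i`, so the
disjoint sequence `g (Nat.pair i k + 1)` shows that `Φ b` is not a weak multiplier unless `b = 0`.
-/

open Function
open scoped BoundedContinuousFunction NNReal

theorem Function.Injective.exists_forall_add_ne {α : Type*} {x : ℕ → α}
    (hx : Injective x) (p : α) : ∃ s, ∀ n, x (n + s) ≠ p := by
  by_cases h : ∃ m, x m = p
  · obtain ⟨m, rfl⟩ := h
    exact ⟨m + 1, fun n hn => by have := hx hn; omega⟩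
  · exact ⟨0, fun n hn => h ⟨n + 0, hn⟩⟩

theorem exists_pairwise_disjoint_isOpen_of_tendsto {X : Type*} [TopologicalSpace X] [T2Space X]
    {y : ℕ → X} {p : X} (hy : Injective y) (hyp : ∀ n, y n ≠ p)
    (hlim : Tendsto y atTop (𝓝 p)) :
    ∃ U : ℕ → Set X, (∀ n, IsOpen (U n)) ∧ (∀ n, y n ∈ U n) ∧ Pairwise (Disjoint on U) := by
  have hsep : ∀ m, ∃ V W : Set X, IsOpen V ∧ IsOpen W ∧ y m ∈ V ∧
      (∀ k, m < k → y k ∈ W) ∧ Disjoint V W := by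
    intro m
    have htail : IsCompact (insert p (Set.range fun k => y (k + (m + 1)))) :=
      (hlim.comp (tendsto_add_atTop_nat (m + 1))).isCompact_insert_range
    have hm : y m ∉ insert p (Set.range fun k => y (k + (m + 1))) := by
      rintro (h | ⟨k, hk⟩)
      · exact hyp m h
      · have := hy hk; omega
    obtain ⟨V, W, hV, hW, hmV, htW, hVW⟩ := SeparatedNhds.of_isCompact_isCompact
      isCompact_singleton htail (Set.disjoint_singleton_left.2 hm)
    refine ⟨V, W, hV, hW, hmV rfl, fun k hk => htW (Or.inr ⟨k - (m + 1), ?_⟩), hVW⟩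
    simp only [Nat.sub_add_cancel hk]
  choose V W hV hW hyV hyW hVW using hsep
  refine ⟨fun n => V n ∩ ⋂ m ∈ Finset.range n, W m,
    fun n => (hV n).inter (isOpen_biInter_finset fun m _ => hW m),
    fun n => ⟨hyV n, Set.mem_iInter₂.2 fun m hm => hyW m n (Finset.mem_range.1 hm)⟩, ?_⟩
  refine (pairwise_disjoint_on _).2 fun m n hmn => (hVW m).mono Set.inter_subset_left ?_
  exact Set.inter_subset_right.trans (Set.biInter_subset_of_mem (Finset.mem_range.2 hmn))

theorem exists_bump_of_isOpen {X : Type*} [TopologicalSpace X] [CompactSpace X] [T2Space X]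
    {U : Set X} (hU : IsOpen U) {x : X} (hx : x ∈ U) :
    ∃ g : C(X, ℝ), ‖g‖ ≤ 1 ∧ g x = 1 ∧ support g ⊆ U := by
  obtain ⟨g, hg0, hg1, hg01⟩ := exists_continuous_zero_one_of_isClosed hU.isClosed_compl
    isClosed_singleton (Set.disjoint_singleton_right.2 (not_not.2 hx))
  refine ⟨g, (ContinuousMap.norm_le _ zero_le_one).2 fun z => ?_, hg1 rfl,
    fun z hz => by_contra fun hzU => hz (hg0 hzU)⟩
  rw [Real.norm_eq_abs, abs_le]
  exact ⟨by linarith [(hg01 z).1], (hg01 z).2⟩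

theorem BoundedContinuousFunction.not_finiteDimensional {𝕜 α : Type*} [NormedField 𝕜]
    [TopologicalSpace α] [DiscreteTopology α] [Infinite α] :
    ¬ FiniteDimensional 𝕜 (α →ᵇ 𝕜) := by
  classical
  intro hfin
  let δ : α → α →ᵇ 𝕜 := fun i =>
    ofNormedAddCommGroupDiscrete (Pi.single i 1) 1 fun j => by
      rcases eq_or_ne j i with rfl | h <;> simp [*]
  have hδ : LinearIndependent 𝕜 δ := by
    refine .of_comp (LinearMap.pi fun j => (evalCLM 𝕜 j : (α →ᵇ 𝕜) →L[𝕜] 𝕜).toLinearMap) ?_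
    exact Pi.linearIndependent_single_one α 𝕜
  exact Module.Finite.not_linearIndependent_of_infinite δ hδ

theorem spaceable_of_antilipschitz {E F : Type*} [NormedAddCommGroup E] [NormedSpace ℝ E]
    [CompleteSpace E] [NormedAddCommGroup F] [NormedSpace ℝ F] {A : Set F} (Φ : E →L[ℝ] F)
    {c : ℝ≥0} (hΦ : AntilipschitzWith c Φ) (hE : ¬ FiniteDimensional ℝ E)
    (hA : ∀ b, b ≠ 0 → Φ b ∈ A) : Spaceable A := by
  refine ⟨LinearMap.range (Φ : E →ₗ[ℝ] F), ?_, fun hfin => hE ?_, ?_⟩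
  · rw [LinearMap.coe_range]
    exact hΦ.isClosed_range Φ.uniformContinuous
  · exact .of_injective (Φ : E →ₗ[ℝ] F).rangeRestrict fun a b h =>
      hΦ.injective (congrArg Subtype.val h)
  · rintro _ ⟨b, rfl⟩
    by_cases hb : b = 0
    · simp [hb]
    · exact Or.inl (hA b hb)

namespace ContinuousMap

variable {X : Type*} [TopologicalSpace X]

theorem apply_eq_zero_of_disjoint_support {f g : C(X, ℝ)}
    (hfg : Disjoint (support f) (support g)) {z : X} (hz : f z ≠ 0) :
    g z = 0 :=
  notMem_support.1 (Set.disjoint_left.1 hfg hz)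

theorem mul_eq_zero_of_disjoint_support {f g : C(X, ℝ)}
    (hfg : Disjoint (support f) (support g)) : f * g = 0 := by
  ext z
  by_cases hz : f z = 0
  · simp [hz]
  · simp [apply_eq_zero_of_disjoint_support hfg hz]

variable [CompactSpace X] {ι : Type*} {g : ι → C(X, ℝ)}

theorem norm_sum_smul_le_of_pairwise_disjoint_support (hg : ∀ i, ‖g i‖ ≤ 1)
    (hdisj : Pairwise (Disjoint on fun i => support (g i))) {c : ι → ℝ} {M : ℝ}
    (hM : 0 ≤ M) (s : Finset ι) (hc : ∀ i ∈ s, |c i| ≤ M) :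
    ‖∑ i ∈ s, c i • g i‖ ≤ M := by
  refine (norm_le _ hM).2 fun z => ?_
  simp only [coe_sum, coe_smul, Finset.sum_apply, Pi.smul_apply, smul_eq_mul, Real.norm_eq_abs]
  by_cases h : ∃ i ∈ s, g i z ≠ 0
  · obtain ⟨i, hi, hiz⟩ := h
    rw [Finset.sum_eq_single_of_mem i hi fun j _ hji => by
      rw [apply_eq_zero_of_disjoint_support (hdisj hji.symm) hiz, mul_zero]]
    calc |c i * g i z| = |c i| * |g i z| := abs_mul _ _
      _ ≤ M * 1 := mul_le_mul (hc i hi) ((norm_coe_le_norm _ _).trans (hg i))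
          (abs_nonneg _) hM
      _ = M := mul_one M
  · push Not at h
    rw [Finset.sum_eq_zero fun i hi => by rw [h i hi, mul_zero], abs_zero]
    exact hM

theorem summable_smul_of_pairwise_disjoint_support (hg : ∀ i, ‖g i‖ ≤ 1)
    (hdisj : Pairwise (Disjoint on fun i => support (g i))) {c : ι → ℝ}
    (hc : Tendsto c cofinite (𝓝 0)) : Summable fun i => c i • g i := by
  classical
  refine summable_iff_vanishing_norm.2 fun ε hε => ?_
  have hsmall : ∀ᶠ i in cofinite, |c i| ≤ ε / 2 := by
    simpa [Real.dist_eq] using hc.eventually (Metric.closedBall_mem_nhds 0 (half_pos hε))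
  refine ⟨hsmall.toFinset, fun t ht => ?_⟩
  refine (norm_sum_smul_le_of_pairwise_disjoint_support hg hdisj (half_pos hε).le t
    fun i hi => ?_).trans_lt (half_lt_self hε)
  by_contra hci
  exact Finset.disjoint_left.1 ht hi (hsmall.mem_toFinset.2 hci)

theorem norm_tsum_smul_le_of_pairwise_disjoint_support (hg : ∀ i, ‖g i‖ ≤ 1)
    (hdisj : Pairwise (Disjoint on fun i => support (g i))) {c : ι → ℝ} {M : ℝ}
    (hM : 0 ≤ M) (hc : ∀ i, |c i| ≤ M) : ‖∑' i, c i • g i‖ ≤ M := by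
  by_cases hs : Summable fun i => c i • g i
  · exact le_of_tendsto' hs.hasSum.norm fun s =>
      norm_sum_smul_le_of_pairwise_disjoint_support hg hdisj hM s fun i _ => hc i
  · rw [tsum_eq_zero_of_not_summable hs, norm_zero]
    exact hM

end ContinuousMap

theorem IsWeakMultiplier.eq_zero_of_forall_apply_eq {K : Type*} [TopologicalSpace K]
    [CompactSpace K] {T : C(K, ℝ) →L[ℝ] C(K, ℝ)} (hT : IsWeakMultiplier T) {e : ℕ → C(K, ℝ)}
    {x : ℕ → K} (he : ∃ M, ∀ n, ‖e n‖ ≤ M) (hdisj : Pairwise fun i j => e i * e j = 0)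
    (hx : ∀ n, e n (x n) = 0) {a : ℝ} (ha : ∀ n, T (e n) (x n) = a) : a = 0 :=
  tendsto_nhds_unique (tendsto_const_nhds.congr fun n => (ha n).symm)
    (hT e x he (fun _ _ h => hdisj h) hx)

theorem exists_clm_apply_eq_tsum {X ι α : Type*} [TopologicalSpace X] [CompactSpace X]
    [TopologicalSpace α] {g : ι → C(X, ℝ)} (hg : ∀ i, ‖g i‖ ≤ 1)
    (hdisj : Pairwise (Disjoint on fun i => support (g i))) {ψ : ι → C(X, ℝ) →L[ℝ] ℝ} {C : ℝ}
    (hC : 0 ≤ C) (hψ : ∀ i, ‖ψ i‖ ≤ C) (hψ0 : ∀ e, Tendsto (fun i => ψ i e) cofinite (𝓝 0))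
    (f : ι → α) :
    ∃ Φ : (α →ᵇ ℝ) →L[ℝ] C(X, ℝ) →L[ℝ] C(X, ℝ),
      ∀ b e z, Φ b e z = ∑' i, b (f i) * ψ i e * g i z := by
  set c : (α →ᵇ ℝ) → C(X, ℝ) → ι → ℝ := fun b e i => b (f i) * ψ i e
  have hc : ∀ b e i, |c b e i| ≤ ‖b‖ * ‖ψ i e‖ := fun b e i => by
    rw [abs_mul, ← Real.norm_eq_abs, ← Real.norm_eq_abs]
    exact mul_le_mul_of_nonneg_right (b.norm_coe_le_norm _) (norm_nonneg _)
  have hsum : ∀ b e, Summable fun i => c b e i • g i := fun b e =>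
    ContinuousMap.summable_smul_of_pairwise_disjoint_support hg hdisj <|
      squeeze_zero_norm (hc b e) (by simpa using ((hψ0 e).norm.const_mul ‖b‖))
  let B : (α →ᵇ ℝ) →ₗ[ℝ] C(X, ℝ) →ₗ[ℝ] C(X, ℝ) :=
    LinearMap.mk₂ ℝ (fun b e => ∑' i, c b e i • g i)
      (fun b b' e => by
        simp only [c, BoundedContinuousFunction.coe_add, Pi.add_apply, add_mul, add_smul]
        exact (hsum b e).tsum_add (hsum b' e))
      (fun r b e => by
        simp only [c, BoundedContinuousFunction.coe_smul, smul_eq_mul, mul_assoc, mul_smul]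
        exact tsum_const_smul'' r)
      (fun b e e' => by
        simp only [c, map_add, mul_add, add_smul]
        exact (hsum b e).tsum_add (hsum b e'))
      (fun r b e => by
        simp only [c, map_smul, smul_eq_mul, mul_left_comm _ r, mul_smul]
        exact tsum_const_smul'' r)
  have hB : ∀ b e, ‖B b e‖ ≤ C * ‖b‖ * ‖e‖ := fun b e =>
    ContinuousMap.norm_tsum_smul_le_of_pairwise_disjoint_support hg hdisj (by positivity)
      fun i => (hc b e i).trans <| by
        rw [mul_comm C, mul_assoc]
        exact mul_le_mul_of_nonneg_left ((ψ i).le_of_opNorm_le (hψ i) e) (norm_nonneg b)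
  refine ⟨B.mkContinuous₂ C hB, fun b e z => ?_⟩
  simpa [B, c, mul_assoc] using (ContinuousMap.evalCLM ℝ z).map_tsum (hsum b e)

theorem exists_antilipschitz_clm_not_isWeakMultiplier {K : Type*} [TopologicalSpace K]
    [CompactSpace K] {y : ℕ → K} {p : K} (hlim : Tendsto y atTop (𝓝 p)) {g : ℕ → C(K, ℝ)}
    (hg : ∀ n, ‖g n‖ ≤ 1) (hgy : ∀ n, g n (y n) = 1)
    (hdisj : Pairwise (Disjoint on fun n => support (g n))) :
    ∃ Φ : (ℕ →ᵇ ℝ) →L[ℝ] C(K, ℝ) →L[ℝ] C(K, ℝ),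
      AntilipschitzWith 1 Φ ∧ ∀ b, b ≠ 0 → ¬ IsWeakMultiplier (Φ b) := by
  have hgy' : ∀ n m, n ≠ m → g n (y m) = 0 := fun n m h =>
    ContinuousMap.apply_eq_zero_of_disjoint_support (hdisj h.symm) (by simp [hgy])
  obtain ⟨Φ, hΦ⟩ := exists_clm_apply_eq_tsum hg hdisj zero_le_two
    (ψ := fun n => ContinuousMap.evalCLM ℝ (y (n + 1)) - ContinuousMap.evalCLM ℝ (y n))
    (fun n => ContinuousLinearMap.opNorm_le_bound _ zero_le_two fun e => by
      simpa [two_mul] using norm_sub_le_of_le (e.norm_coe_le_norm (y (n + 1)))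
        (e.norm_coe_le_norm (y n)))
    (fun e => by
      have h := (e.continuous.tendsto p).comp hlim
      simpa [Nat.cofinite_eq_atTop] using (h.comp (tendsto_add_atTop_nat 1)).sub h)
    fun n => n.unpair.1
  have hΦg : ∀ b i k, Φ b (g (Nat.pair i k + 1)) (y (Nat.pair i k)) = b i := by
    intro b i k
    rw [hΦ, tsum_eq_single (Nat.pair i k) fun n hn => by simp [hgy' n _ hn]]
    simp [hgy, hgy' _ _ (Nat.succ_ne_self _)]
  have hlow : ∀ b : ℕ →ᵇ ℝ, ‖b‖ ≤ ‖Φ b‖ := fun b => by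
    refine (BoundedContinuousFunction.norm_le (norm_nonneg (Φ b))).2 fun i => ?_
    calc ‖b i‖ = ‖Φ b (g (Nat.pair i 0 + 1)) (y (Nat.pair i 0))‖ := by rw [hΦg]
      _ ≤ ‖Φ b (g (Nat.pair i 0 + 1))‖ := ContinuousMap.norm_coe_le_norm _ _
      _ ≤ ‖Φ b‖ * ‖g (Nat.pair i 0 + 1)‖ := (Φ b).le_opNorm _
      _ ≤ ‖Φ b‖ := mul_le_of_le_one_right (norm_nonneg (Φ b)) (hg _)
  have hanti : AntilipschitzWith 1 Φ :=
    AddMonoidHomClass.antilipschitz_of_bound Φ fun b => by simpa using hlow b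
  refine ⟨Φ, hanti, fun b hb hT => ?_⟩
  obtain ⟨i, hi⟩ : ∃ i, b i ≠ 0 := by
    by_contra! h
    exact hb (BoundedContinuousFunction.ext h)
  have hinj : Injective fun k => Nat.pair i k + 1 := fun k l h => by
    simpa using Nat.pair_eq_pair.1 (Nat.succ_injective h)
  exact hi <| hT.eq_zero_of_forall_apply_eq ⟨1, fun k => hg _⟩
    ((hdisj.comp_of_injective hinj).mono fun _ _ => ContinuousMap.mul_eq_zero_of_disjoint_support)
    (fun k => hgy' _ _ (Nat.succ_ne_self _)) (hΦg b i)

/-- If `K` has a non-trivial convergent sequence, then the set of operators on `C(K, ℝ)`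
that are not weak multipliers is spaceable. -/
theorem spaceable_nonWeakMultipliers_of_convergent_sequence
    {K : Type*} [TopologicalSpace K] [CompactSpace K] [T2Space K]
    (x : ℕ → K) (hinj : Function.Injective x)
    (p : K) (hconv : Filter.Tendsto x Filter.atTop (nhds p)) :
    Spaceable {T : C(K, ℝ) →L[ℝ] C(K, ℝ) | ¬ IsWeakMultiplier T} := by
  obtain ⟨s, hs⟩ := hinj.exists_forall_add_ne p
  obtain ⟨U, hUo, hyU, hUd⟩ := exists_pairwise_disjoint_isOpen_of_tendsto
    (hinj.comp (add_left_injective s)) hs (hconv.comp (tendsto_add_atTop_nat s))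
  choose g hg hgy hgU using fun n => exists_bump_of_isOpen (hUo n) (hyU n)
  obtain ⟨Φ, hΦ, hΦnm⟩ := exists_antilipschitz_clm_not_isWeakMultiplier
    (hconv.comp (tendsto_add_atTop_nat s)) hg hgy fun m n h => (hUd h).mono (hgU m) (hgU n)
  exact spaceable_of_antilipschitz Φ hΦ BoundedContinuousFunction.not_finiteDimensional hΦnm
end

section
/- Let K be a compact Hausdorff space and let (x_n) be a sequence in K that does not converge to any point of K. Then there exists a continuous function f : K → ℝ such that the sets A = {n ∈ ℕ : f(x_n) = 0} and B = {n ∈ ℕ : f(x_n) = 1} are both infinite. -/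
open Filter Topology

/-- A unique cluster point in a compact space is a limit, so there must be a second one. -/
theorem exists_ne_mapClusterPt_of_not_tendsto {X ι : Type*} [TopologicalSpace X] [CompactSpace X]
    {l : Filter ι} [l.NeBot] {u : ι → X} (h : ∀ p : X, ¬ Tendsto u l (𝓝 p)) :
    ∃ p q : X, p ≠ q ∧ MapClusterPt p l u ∧ MapClusterPt q l u := by
  obtain ⟨p, -, hp⟩ := isCompact_univ.exists_mapClusterPt (f := l) (u := u) (by simp)
  have hq : ∃ q, MapClusterPt q l u ∧ q ≠ p := by
    by_contra! hunique
    exact h p (tendsto_nhds_of_unique_mapClusterPt hunique)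
  obtain ⟨q, hq, hqp⟩ := hq
  exact ⟨p, q, hqp.symm, hp, hq⟩

/-- Urysohn's lemma applied to disjoint closed neighbourhoods of `p` and `q`. -/
theorem exists_continuous_eventually_eq_zero_one {X : Type*} [TopologicalSpace X] [T4Space X]
    {p q : X} (hpq : p ≠ q) :
    ∃ f : C(X, ℝ), (∀ᶠ y in 𝓝 p, f y = 0) ∧ (∀ᶠ y in 𝓝 q, f y = 1) := by
  obtain ⟨U, ⟨hU, hUc⟩, V, ⟨hV, hVc⟩, hUV⟩ :=
    ((closed_nhds_basis p).disjoint_iff (closed_nhds_basis q)).mp (disjoint_nhds_nhds.mpr hpq)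
  obtain ⟨f, hf0, hf1, -⟩ := exists_continuous_zero_one_of_isClosed hUc hVc hUV
  exact ⟨f, mem_of_superset hU fun y hy => hf0 hy, mem_of_superset hV fun y hy => hf1 hy⟩

/-- If a sequence in a compact Hausdorff space `K` does not converge, then there is a continuous
real-valued function on `K` taking the value `0` on infinitely many terms of the sequence
and the value `1` on infinitely many terms. -/
theorem exists_continuous_zero_one_infinite_of_not_convergent
    {K : Type*} [TopologicalSpace K] [CompactSpace K] [T2Space K]
    (x : ℕ → K) (h : ∀ p : K, ¬ Filter.Tendsto x Filter.atTop (nhds p)) :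
    ∃ f : C(K, ℝ), {n : ℕ | f (x n) = 0}.Infinite ∧ {n : ℕ | f (x n) = 1}.Infinite := by
  obtain ⟨p, q, hpq, hp, hq⟩ := exists_ne_mapClusterPt_of_not_tendsto h
  obtain ⟨f, hf0, hf1⟩ := exists_continuous_eventually_eq_zero_one hpq
  exact ⟨f, Nat.frequently_atTop_iff_infinite.mp (hp.frequently hf0),
    Nat.frequently_atTop_iff_infinite.mp (hq.frequently hf1)⟩
end

section
/- Let βℕ denote the Stone–Čech compactification of the natural numbers with the discrete topology. Then the set NM(C(βℕ)) of bounded linear operators on C(βℕ) that are not weak multipliers is spaceable in L(C(βℕ)). -/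
open Filter Topology

/-!
Let `π, σ : βℕ → βℕ` extend `n ↦ (Nat.unpair n).1` and `n ↦ n + 1`. The weighted composition
operators `Ψ g : f ↦ (g ∘ π) · (f ∘ σ)` depend linearly and, since `π` is onto,
isometrically on `g ∈ C(βℕ)`, so they form a closed infinite-dimensional subspace of
`L(C(βℕ))`. If `g (m) ≠ 0`, the indicators `e_i` of the points `Nat.pair m i + 1` are disjoint
and vanish at `x_i = Nat.pair m i`, while `Ψ g (e_i) (x_i) = g (m) · e_i (x_i + 1) = g (m)`;
so no `Ψ g` with `g ≠ 0` is a weak multiplier.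
-/

open Function Set

noncomputable section

namespace ContinuousMap

variable {X Y : Type*} [TopologicalSpace X] [CompactSpace X] [TopologicalSpace Y]

section Comp

variable {E : Type*} [NormedAddCommGroup E]

theorem norm_comp_le [CompactSpace Y] (g : C(Y, E)) (σ : C(X, Y)) : ‖g.comp σ‖ ≤ ‖g‖ :=
  (norm_le _ (norm_nonneg g)).2 fun x => g.norm_coe_le_norm (σ x)

theorem norm_comp_of_surjective [CompactSpace Y] (g : C(Y, E)) {π : C(X, Y)}
    (hπ : Surjective π) : ‖g.comp π‖ = ‖g‖ :=
  le_antisymm (norm_comp_le g π) <| (norm_le _ (norm_nonneg _)).2 fun y => by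
    obtain ⟨x, rfl⟩ := hπ y
    exact (g.comp π).norm_coe_le_norm x

variable (𝕜 : Type*) [NormedField 𝕜] [NormedSpace 𝕜 E]

def compRightL [CompactSpace Y] (σ : C(X, Y)) : C(Y, E) →L[𝕜] C(X, E) :=
  LinearMap.mkContinuous
    { toFun g := g.comp σ
      map_add' _ _ := rfl
      map_smul' _ _ := rfl }
    1 fun g => by simpa using norm_comp_le g σ

end Comp

variable {𝕜 : Type*} [NontriviallyNormedField 𝕜]

def weightedComp (π : C(X, Y)) (σ : C(X, X)) : C(Y, 𝕜) →ₗ[𝕜] C(X, 𝕜) →L[𝕜] C(X, 𝕜) where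
  toFun g := ContinuousLinearMap.mul 𝕜 _ (g.comp π) ∘L compRightL 𝕜 σ
  map_add' g h := by ext; simp
  map_smul' c g := by ext; simp

theorem weightedComp_apply (π : C(X, Y)) (σ : C(X, X)) (g : C(Y, 𝕜)) (f : C(X, 𝕜)) (x : X) :
    weightedComp π σ g f x = g (π x) * f (σ x) := rfl

theorem norm_weightedComp [CompactSpace Y] {π : C(X, Y)} (hπ : Surjective π) (σ : C(X, X))
    (g : C(Y, 𝕜)) : ‖weightedComp π σ g‖ = ‖g‖ := by
  refine le_antisymm ((weightedComp π σ g).opNorm_le_bound (norm_nonneg g) fun f => ?_) ?_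
  · calc ‖(g.comp π) * f.comp σ‖ ≤ ‖g.comp π‖ * ‖f.comp σ‖ := norm_mul_le _ _
      _ ≤ ‖g‖ * ‖f‖ := by gcongr <;> exact norm_comp_le _ _
  · have h1 : ‖(1 : C(X, 𝕜))‖ ≤ 1 := (norm_le _ zero_le_one).2 fun _ => by simp
    calc ‖g‖ = ‖weightedComp π σ g 1‖ := by
          rw [← norm_comp_of_surjective g hπ]; congr 1; ext; simp [weightedComp_apply]
      _ ≤ ‖weightedComp π σ g‖ * 1 := (weightedComp π σ g).le_opNorm_of_le h1
      _ = ‖weightedComp π σ g‖ := mul_one _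

def weightedCompₗᵢ [CompactSpace Y] {π : C(X, Y)} (hπ : Surjective π) (σ : C(X, X)) :
    C(Y, 𝕜) →ₗᵢ[𝕜] C(X, 𝕜) →L[𝕜] C(X, 𝕜) :=
  ⟨weightedComp π σ, norm_weightedComp hπ σ⟩

@[simp]
theorem weightedCompₗᵢ_apply [CompactSpace Y] {π : C(X, Y)} (hπ : Surjective π) (σ : C(X, X))
    (g : C(Y, 𝕜)) (f : C(X, 𝕜)) (x : X) : weightedCompₗᵢ hπ σ g f x = g (π x) * f (σ x) := rfl

end ContinuousMap

theorem spaceable_of_linearIsometry {E F : Type*} [NormedAddCommGroup E] [NormedSpace ℝ E]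
    [CompleteSpace E] [NormedAddCommGroup F] [NormedSpace ℝ F] {A : Set F} (Ψ : E →ₗᵢ[ℝ] F)
    (hE : ¬ FiniteDimensional ℝ E) (hA : ∀ g ≠ 0, Ψ g ∈ A) : Spaceable A := by
  refine ⟨LinearMap.range Ψ.toLinearMap, ?_, fun h => hE ?_, ?_⟩
  · exact Ψ.isometry.isClosedEmbedding.isClosed_range
  · exact Module.Finite.equiv Ψ.equivRange.toLinearEquiv.symm
  · rintro _ ⟨g, rfl⟩
    obtain rfl | hg := eq_or_ne g 0
    · exact Or.inr (map_zero Ψ)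
    · exact Or.inl (hA g hg)

theorem not_isWeakMultiplier_of_apply_eq {K : Type*} [TopologicalSpace K] [CompactSpace K]
    {T : C(K, ℝ) →L[ℝ] C(K, ℝ)} (e : ℕ → C(K, ℝ)) (x : ℕ → K) (he : ∃ M, ∀ n, ‖e n‖ ≤ M)
    (he_disj : Pairwise fun i j => e i * e j = 0) (hex : ∀ n, e n (x n) = 0) {c : ℝ}
    (hc : c ≠ 0) (hT : ∀ n, T (e n) (x n) = c) : ¬ IsWeakMultiplier T := fun hT' =>
  hc <| tendsto_nhds_unique tendsto_const_nhds <| by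
    simpa only [hT] using hT' e x he (fun _ _ => @he_disj _ _) hex

section StoneCech

variable {α β : Type*} [TopologicalSpace α] [TopologicalSpace β]

def stoneCechMap {f : α → β} (hf : Continuous f) : C(StoneCech α, StoneCech β) :=
  ⟨stoneCechExtend (continuous_stoneCechUnit.comp hf), continuous_stoneCechExtend _⟩

@[simp]
theorem stoneCechMap_stoneCechUnit {f : α → β} (hf : Continuous f) (a : α) :
    stoneCechMap hf (stoneCechUnit a) = stoneCechUnit (f a) :=
  stoneCechExtend_stoneCechUnit (continuous_stoneCechUnit.comp hf) a

theorem surjective_stoneCechMap {f : α → β} (hf : Continuous f) (hf_surj : Surjective f) :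
    Surjective (stoneCechMap hf) := by
  have hsub : range (stoneCechUnit : β → StoneCech β) ⊆ range (stoneCechMap hf) := by
    rintro _ ⟨b, rfl⟩
    obtain ⟨a, rfl⟩ := hf_surj b
    exact ⟨stoneCechUnit a, stoneCechMap_stoneCechUnit hf a⟩
  refine range_eq_univ.1 (eq_univ_of_univ_subset ?_)
  rw [← denseRange_stoneCechUnit.closure_range]
  exact closure_minimal hsub (isCompact_range (stoneCechMap hf).continuous).isClosed

theorem ContinuousMap.stoneCech_ext {γ : Type*} [TopologicalSpace γ] [T2Space γ]
    {f g : C(StoneCech α, γ)} (h : ∀ a, f (stoneCechUnit a) = g (stoneCechUnit a)) : f = g :=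
  ContinuousMap.ext <| congrFun (stoneCech_hom_ext f.continuous g.continuous (funext h))

variable [DiscreteTopology α] [DecidableEq α]

-- `stoneCechExtend` needs a compact codomain, hence the detour through `unitInterval`.
def stoneCechIndicator (a : α) : C(StoneCech α, ℝ) :=
  ⟨fun x => stoneCechExtend (β := unitInterval) (g := fun b => if b = a then 1 else 0)
      continuous_of_discreteTopology x,
    continuous_subtype_val.comp (continuous_stoneCechExtend _)⟩

theorem stoneCechIndicator_stoneCechUnit (a b : α) :
    stoneCechIndicator a (stoneCechUnit b) = if b = a then 1 else 0 := by
  change ((stoneCechExtend _ (stoneCechUnit b) : unitInterval) : ℝ) = _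
  rw [stoneCechExtend_stoneCechUnit]
  split_ifs <;> rfl

theorem norm_stoneCechIndicator_le (a : α) : ‖stoneCechIndicator a‖ ≤ 1 :=
  (ContinuousMap.norm_le _ zero_le_one).2 fun x => by
    have hx : stoneCechIndicator a x ∈ unitInterval := Subtype.property _
    rw [Real.norm_eq_abs, abs_of_nonneg hx.1]
    exact hx.2

theorem stoneCechIndicator_mul_stoneCechIndicator {a b : α} (hab : a ≠ b) :
    stoneCechIndicator a * stoneCechIndicator b = 0 :=
  ContinuousMap.stoneCech_ext fun c => by
    obtain rfl | hca := eq_or_ne c a <;>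
      simp [stoneCechIndicator_stoneCechUnit, *]

theorem linearIndependent_stoneCechIndicator :
    LinearIndependent ℝ (stoneCechIndicator : α → C(StoneCech α, ℝ)) := by
  let ev : C(StoneCech α, ℝ) →ₗ[ℝ] α → ℝ :=
    LinearMap.pi fun a => (ContinuousMap.evalCLM ℝ (stoneCechUnit a)).toLinearMap
  have hev : ev ∘ stoneCechIndicator = fun a => Pi.single a 1 := by
    ext a b
    simp [ev, stoneCechIndicator_stoneCechUnit, Pi.single_apply]
  exact LinearIndependent.of_comp ev (hev ▸ Pi.linearIndependent_single_one α ℝ)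

theorem not_finiteDimensional_continuousMap_stoneCech [Infinite α] :
    ¬ FiniteDimensional ℝ C(StoneCech α, ℝ) := fun _ =>
  Module.Finite.not_linearIndependent_of_infinite _
    (linearIndependent_stoneCechIndicator (α := α))

end StoneCech

def stoneCechNatWeightedComp :
    C(StoneCech ℕ, ℝ) →ₗᵢ[ℝ] C(StoneCech ℕ, ℝ) →L[ℝ] C(StoneCech ℕ, ℝ) :=
  ContinuousMap.weightedCompₗᵢ
    (surjective_stoneCechMap (f := fun n => n.unpair.1) continuous_of_discreteTopology
      fun m => ⟨Nat.pair m 0, by simp⟩)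
    (stoneCechMap (f := Nat.succ) continuous_of_discreteTopology)

theorem not_isWeakMultiplier_stoneCechNatWeightedComp {g : C(StoneCech ℕ, ℝ)} (hg : g ≠ 0) :
    ¬ IsWeakMultiplier (stoneCechNatWeightedComp g) := by
  obtain ⟨m, hm⟩ : ∃ m, g (stoneCechUnit m) ≠ 0 := by
    by_contra! h
    exact hg (ContinuousMap.stoneCech_ext h)
  refine not_isWeakMultiplier_of_apply_eq (fun i => stoneCechIndicator (Nat.pair m i + 1))
    (fun i => stoneCechUnit (Nat.pair m i)) ⟨1, fun _ => norm_stoneCechIndicator_le _⟩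
    (fun i j hij => stoneCechIndicator_mul_stoneCechIndicator ?_) (fun i => ?_) hm (fun i => ?_)
  · simpa using hij
  · simp [stoneCechIndicator_stoneCechUnit]
  · simp [stoneCechNatWeightedComp, stoneCechIndicator_stoneCechUnit]

end

/-- The set of operators on `C(βℕ, ℝ)` that are not weak multipliers is spaceable, where
`βℕ` is the Stone–Čech compactification of the discrete space `ℕ`. -/
theorem spaceable_nonWeakMultipliers_stoneCech_nat :
    Spaceable {T : C(StoneCech ℕ, ℝ) →L[ℝ] C(StoneCech ℕ, ℝ) | ¬ IsWeakMultiplier T} :=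
  spaceable_of_linearIsometry stoneCechNatWeightedComp
    not_finiteDimensional_continuousMap_stoneCech
    fun _ => not_isWeakMultiplier_stoneCechNatWeightedComp
end

section
/- Let K be an infinite compact Hausdorff space such that every bounded linear operator on C(K) is a weak multiplication, and let L = K × Bool (Bool discrete), with J : C(L) → C(L) the swap operator (Jf)(x,b) = f(x,¬b). Then J is not a weak multiplier, and every bounded linear operator T on C(L) can be written as T = g·J + W, where g ∈ C(L) (g·J denotes the operator f ↦ g·(Jf)) and W is a weak multiplication on C(L). -/
open Filter Topology

/-- The swap operator `J` on `C(K × Bool, ℝ)`, `(J f)(x, b) = f (x, ¬b)`. -/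
noncomputable def swapOp (K : Type*) [TopologicalSpace K] [CompactSpace K] :
    C(K × Bool, ℝ) →L[ℝ] C(K × Bool, ℝ) :=
  LinearMap.mkContinuous
    { toFun := fun f => f.comp
        ⟨fun p => (p.1, !p.2),
          continuous_fst.prodMk ((continuous_of_discreteTopology (f := fun b : Bool => !b)).comp continuous_snd)⟩
      map_add' := fun f g => rfl
      map_smul' := fun c f => rfl }
    1
    (fun f => by
      rw [one_mul]
      exact (ContinuousMap.norm_le _ (norm_nonneg f)).mpr fun p => f.norm_coe_le_norm _)

@[simp] theorem swapOp_apply {K : Type*} [TopologicalSpace K] [CompactSpace K]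
    (f : C(K × Bool, ℝ)) (p : K × Bool) : swapOp K f p = f (p.1, !p.2) := rfl

/-- The restriction operator `π_i : C(K × Bool, ℝ) → C(K, ℝ)`, `π_i(f)(x) = f (x, i)`. -/
noncomputable def piOp (K : Type*) [TopologicalSpace K] [CompactSpace K] (i : Bool) :
    C(K × Bool, ℝ) →L[ℝ] C(K, ℝ) :=
  LinearMap.mkContinuous
    { toFun := fun f => f.comp ⟨fun x => (x, i), continuous_id.prodMk continuous_const⟩
      map_add' := fun f g => rfl
      map_smul' := fun c f => rfl }
    1
    (fun f => by
      rw [one_mul]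
      exact (ContinuousMap.norm_le _ (norm_nonneg f)).mpr fun x => f.norm_coe_le_norm _)

@[simp] theorem piOp_apply {K : Type*} [TopologicalSpace K] [CompactSpace K] (i : Bool)
    (f : C(K × Bool, ℝ)) (x : K) : piOp K i f x = f (x, i) := rfl

/-- The extension operator `σ_i : C(K, ℝ) → C(K × Bool, ℝ)`, `σ_i(g)(x, b) = g x` if `b = i`
and `0` otherwise. -/
noncomputable def sigmaOp (K : Type*) [TopologicalSpace K] [CompactSpace K] (i : Bool) :
    C(K, ℝ) →L[ℝ] C(K × Bool, ℝ) :=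
  LinearMap.mkContinuous
    { toFun := fun g =>
        ⟨fun p => if p.2 = i then g p.1 else 0, by
          have : (fun p : K × Bool => if p.2 = i then g p.1 else 0)
              = fun p : K × Bool => (if p.2 = i then (1 : ℝ) else 0) * g p.1 := by
            funext p
            by_cases h : p.2 = i <;> simp [h]
          rw [this]
          exact (((continuous_of_discreteTopology
              (f := fun b : Bool => if b = i then (1 : ℝ) else 0)).comp
            continuous_snd).mul (g.continuous.comp continuous_fst))⟩
      map_add' := fun f g => by
        ext p
        by_cases h : p.2 = i <;> simp [h]
      map_smul' := fun c f => by
        ext p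
        by_cases h : p.2 = i <;> simp [h] }
    1
    (fun g => by
      rw [one_mul]
      refine (ContinuousMap.norm_le _ (norm_nonneg g)).mpr fun p => ?_
      simp only [ContinuousMap.coe_mk, LinearMap.coe_mk, AddHom.coe_mk]
      by_cases h : p.2 = i
      · simpa [h] using g.norm_coe_le_norm p.1
      · simp [h])

@[simp] theorem sigmaOp_apply {K : Type*} [TopologicalSpace K] [CompactSpace K] (i : Bool)
    (g : C(K, ℝ)) (p : K × Bool) : sigmaOp K i g p = if p.2 = i then g p.1 else 0 := rfl

/-!
`J` fails to be a weak multiplier because it moves mass between the two copies of `K`: a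
disjoint sequence of bumps `e_n` supported on `K × {false}` vanishes at the points
`(y_n, true)`, while `J e_n` equals `1` there.

For the decomposition, write `T` as the `2 × 2` matrix of operators `π_i T σ_j` on `C(K)`. Each
entry is `g_ij I + S_ij` with `S_ij` weakly compact. The multiplication parts of the diagonal
entries assemble to a multiplication operator on `C(K × Bool)`, those of the off-diagonal
entries to a multiplication operator composed with `J`, and the `S_ij` to a weakly compact
operator.
-/

open ContinuousLinearMap

section WeaklyCompact

variable {D E F G : Type*} [NormedAddCommGroup D] [NormedSpace ℝ D]
  [NormedAddCommGroup E] [NormedSpace ℝ E] [NormedAddCommGroup F] [NormedSpace ℝ F]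
  [NormedAddCommGroup G] [NormedSpace ℝ G]

def IsWeaklyCompactOperator (S : E →L[ℝ] F) : Prop :=
  IsCompact (closure (toWeakSpace ℝ F '' (S '' Metric.closedBall 0 1)))

theorem isWeaklyCompactOp_iff {K : Type*} [TopologicalSpace K] [CompactSpace K]
    (S : C(K, ℝ) →L[ℝ] C(K, ℝ)) : IsWeaklyCompactOp S ↔ IsWeaklyCompactOperator S :=
  Iff.rfl

namespace IsWeaklyCompactOperator

theorem zero : IsWeaklyCompactOperator (0 : E →L[ℝ] F) := by
  refine (isCompact_singleton (x := 0)).closure_of_subset ?_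
  rintro _ ⟨_, ⟨f, -, rfl⟩, rfl⟩
  exact map_zero _

theorem add {S S' : E →L[ℝ] F} (hS : IsWeaklyCompactOperator S)
    (hS' : IsWeaklyCompactOperator S') : IsWeaklyCompactOperator (S + S') := by
  refine (IsCompact.add hS hS').closure_of_subset ?_
  rintro _ ⟨_, ⟨f, hf, rfl⟩, rfl⟩
  exact Set.add_mem_add (subset_closure ⟨S f, ⟨f, hf, rfl⟩, rfl⟩)
    (subset_closure ⟨S' f, ⟨f, hf, rfl⟩, rfl⟩)

theorem sum {ι : Type*} (s : Finset ι) {S : ι → E →L[ℝ] F}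
    (hS : ∀ i ∈ s, IsWeaklyCompactOperator (S i)) : IsWeaklyCompactOperator (∑ i ∈ s, S i) := by
  classical
  induction s using Finset.induction_on with
  | empty => simpa using zero
  | insert i s hi ih =>
    rw [Finset.sum_insert hi]
    exact (hS i (s.mem_insert_self i)).add (ih fun j hj => hS j (Finset.mem_insert_of_mem hj))

theorem comp_left (A : F →L[ℝ] G) {S : E →L[ℝ] F} (hS : IsWeaklyCompactOperator S) :
    IsWeaklyCompactOperator (A.comp S) := by
  refine (hS.image (WeakSpace.map A).continuous).closure_of_subset ?_
  rintro _ ⟨_, ⟨f, hf, rfl⟩, rfl⟩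
  exact ⟨toWeakSpace ℝ F (S f), subset_closure ⟨S f, ⟨f, hf, rfl⟩, rfl⟩, rfl⟩

theorem comp_right {S : E →L[ℝ] F} (hS : IsWeaklyCompactOperator S) (A : D →L[ℝ] E) :
    IsWeaklyCompactOperator (S.comp A) := by
  set c : ℝ := ‖A‖ + 1
  have hc : 0 < c := by positivity
  refine (hS.image (continuous_const_smul c)).closure_of_subset ?_
  rintro _ ⟨_, ⟨f, hf, rfl⟩, rfl⟩
  have hAf : c⁻¹ • A f ∈ Metric.closedBall (0 : E) 1 := by
    rw [mem_closedBall_zero_iff, norm_smul, norm_inv, Real.norm_of_nonneg hc.le,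
      inv_mul_le_one₀ hc]
    calc ‖A f‖ ≤ ‖A‖ * ‖f‖ := A.le_opNorm f
      _ ≤ ‖A‖ * 1 := by gcongr; simpa using hf
      _ ≤ c := by linarith
  refine ⟨_, subset_closure ⟨S (c⁻¹ • A f), ⟨_, hAf, rfl⟩, rfl⟩, ?_⟩
  change c • toWeakSpace ℝ F (S (c⁻¹ • A f)) = toWeakSpace ℝ F (S (A f))
  rw [← map_smul, ← map_smul, smul_inv_smul₀ hc.ne']

end IsWeaklyCompactOperator

end WeaklyCompact

section ProdBool

variable {K : Type*} [TopologicalSpace K] [CompactSpace K]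

theorem exists_seq_bump_pairwise_mul_eq_zero [T2Space K] [Infinite K] :
    ∃ (f : ℕ → C(K, ℝ)) (y : ℕ → K), (∀ n, ‖f n‖ ≤ 1) ∧ (∀ n, f n (y n) = 1) ∧
      Pairwise fun i j => f i * f j = 0 := by
  obtain ⟨U, hUinf, hUo, hUd⟩ := exists_seq_infinite_isOpen_pairwise_disjoint K
  choose y hy using fun n => (hUinf n).nonempty
  choose f hf0 hf1 hf01 using fun n => exists_continuous_zero_one_of_isClosed
    (hUo n).isClosed_compl isClosed_singleton (Set.disjoint_singleton_right.2 (not_not.2 (hy n)))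
  refine ⟨f, y, fun n => ?_, fun n => hf1 n rfl, fun i j hij => ?_⟩
  · refine (ContinuousMap.norm_le _ zero_le_one).2 fun x => ?_
    rw [Real.norm_eq_abs, abs_le]
    exact ⟨by linarith [(hf01 n x).1], (hf01 n x).2⟩
  · ext x
    by_cases hx : x ∈ U i
    · simp [hf0 j fun hxj => Set.disjoint_left.1 (hUd hij) hx hxj]
    · simp [hf0 i hx]

theorem sigmaOp_mul (i : Bool) (f g : C(K, ℝ)) :
    sigmaOp K i (f * g) = sigmaOp K i f * sigmaOp K i g := by
  ext p
  by_cases h : p.2 = i <;> simp [h]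

theorem norm_sigmaOp_apply_le (i : Bool) (f : C(K, ℝ)) : ‖sigmaOp K i f‖ ≤ ‖f‖ := by
  simpa using (sigmaOp K i).le_of_opNorm_le (LinearMap.mkContinuous_norm_le _ zero_le_one _) f

theorem swapOp_not_isWeakMultiplier [T2Space K] [Infinite K] :
    ¬ IsWeakMultiplier (swapOp K) := by
  obtain ⟨f, y, hf_norm, hf_one, hf_mul⟩ := exists_seq_bump_pairwise_mul_eq_zero (K := K)
  intro hJ
  have h := hJ (fun n => sigmaOp K false (f n)) (fun n => (y n, true))
    ⟨1, fun n => (norm_sigmaOp_apply_le _ _).trans (hf_norm n)⟩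
    (fun i j hij => by rw [← sigmaOp_mul, hf_mul hij, map_zero])
    (fun n => by simp)
  simp only [swapOp_apply, sigmaOp_apply, Bool.not_true, if_true, hf_one] at h
  exact one_ne_zero (tendsto_nhds_unique tendsto_const_nhds h)

theorem sum_sigmaOp_piOp (φ : C(K × Bool, ℝ)) : ∑ i, sigmaOp K i (piOp K i φ) = φ := by
  ext ⟨x, b⟩
  cases b <;> simp

theorem eq_sum_blocks (T : C(K × Bool, ℝ) →L[ℝ] C(K × Bool, ℝ)) :
    T = ∑ i, ∑ j,
      (sigmaOp K i).comp ((((piOp K i).comp T).comp (sigmaOp K j)).comp (piOp K j)) := by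
  ext1 φ
  simp only [sum_apply, comp_apply]
  rw [Finset.sum_comm]
  conv_lhs => rw [← sum_sigmaOp_piOp φ, map_sum]
  exact Finset.sum_congr rfl fun j _ => (sum_sigmaOp_piOp _).symm

theorem sum_sigmaOp_mul_piOp (g : Bool → Bool → C(K, ℝ)) :
    ∑ i, ∑ j, (sigmaOp K i).comp ((mul ℝ C(K, ℝ) (g i j)).comp (piOp K j)) =
      mul ℝ _ (∑ i, sigmaOp K i (g i i)) +
        (mul ℝ _ (∑ i, sigmaOp K i (g i !i))).comp (swapOp K) := by
  ext φ ⟨x, b⟩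
  cases b <;>
  · simp only [Fintype.sum_bool, add_apply, comp_apply, mul_apply', ContinuousMap.add_apply,
      ContinuousMap.mul_apply, sigmaOp_apply, piOp_apply, swapOp_apply, Bool.not_true,
      Bool.not_false, if_true, if_false, Bool.true_eq_false, Bool.false_eq_true]
    ring

theorem exists_eq_mul_comp_swapOp_add_isWeakMultiplication
    (hfew : ∀ S : C(K, ℝ) →L[ℝ] C(K, ℝ), IsWeakMultiplication S)
    (T : C(K × Bool, ℝ) →L[ℝ] C(K × Bool, ℝ)) :
    ∃ (g : C(K × Bool, ℝ)) (W : C(K × Bool, ℝ) →L[ℝ] C(K × Bool, ℝ)),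
      IsWeakMultiplication W ∧ T = (mul ℝ C(K × Bool, ℝ) g).comp (swapOp K) + W := by
  choose g S hS hT using fun i j => hfew (((piOp K i).comp T).comp (sigmaOp K j))
  refine ⟨∑ i, sigmaOp K i (g i !i),
    mul ℝ _ (∑ i, sigmaOp K i (g i i)) + ∑ i, ∑ j, (sigmaOp K i).comp ((S i j).comp (piOp K j)),
    ⟨_, _, ?_, rfl⟩, ?_⟩
  · exact IsWeaklyCompactOperator.sum _ fun i _ => IsWeaklyCompactOperator.sum _ fun j _ =>
      (((isWeaklyCompactOp_iff _).1 (hS i j)).comp_right _).comp_left _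
  · calc T = ∑ i, ∑ j, (sigmaOp K i).comp ((mul ℝ C(K, ℝ) (g i j)).comp (piOp K j)) +
          ∑ i, ∑ j, (sigmaOp K i).comp ((S i j).comp (piOp K j)) := by
          conv_lhs => rw [eq_sum_blocks T]
          simp only [hT, add_comp, comp_add, Finset.sum_add_distrib]
      _ = _ := by rw [sum_sigmaOp_mul_piOp]; abel

end ProdBool

/-- If every operator on `C(K, ℝ)` is a weak multiplication (`K` infinite compact Hausdorff),
then the swap operator `J` on `C(K × Bool, ℝ)` is not a weak multiplier, and every operator `T`
on `C(K × Bool, ℝ)` has the form `g·J + W` with `g ∈ C(K × Bool, ℝ)` and `W` a weak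
multiplication. -/
theorem swapOp_not_weakMultiplier_and_decomposition
    {K : Type*} [TopologicalSpace K] [CompactSpace K] [T2Space K] [Infinite K]
    (hfew : ∀ S : C(K, ℝ) →L[ℝ] C(K, ℝ), IsWeakMultiplication S) :
    ¬ IsWeakMultiplier (swapOp K) ∧
      ∀ T : C(K × Bool, ℝ) →L[ℝ] C(K × Bool, ℝ),
        ∃ (g : C(K × Bool, ℝ)) (W : C(K × Bool, ℝ) →L[ℝ] C(K × Bool, ℝ)),
          IsWeakMultiplication W ∧
          T = (ContinuousLinearMap.mul ℝ C(K × Bool, ℝ) g).comp (swapOp K) + W :=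
  ⟨swapOp_not_isWeakMultiplier, exists_eq_mul_comp_swapOp_add_isWeakMultiplication hfew⟩
end

section
/- Let K be a compact Hausdorff space such that every bounded linear operator on C(K) is a weak multiplication, and let L = K × Bool (Bool discrete). Let T be a bounded linear operator on C(L) and let i ∈ Bool. Then the operator σ_i ∘ π_i ∘ T ∘ σ_i ∘ π_i on C(L) is a weak multiplication on C(L). -/
open Filter Topology

/-!
The compression `π_i T σ_i` is an operator on `C(K)`, hence equal to `g I + S` with `S` weakly
compact. Conjugating back, `σ_i (g I + S) π_i = σ_i(g) I + σ_i S π_i`: the multiplication part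
survives because `σ_i g` vanishes off the `i`-th copy of `K`, and `σ_i S π_i` is weakly compact
because `π_i` is a contraction and bounded operators are weak-to-weak continuous.
-/

theorem isCompact_closure_toWeakSpace_image_image {E F : Type*} [NormedAddCommGroup E]
    [NormedSpace ℝ E] [NormedAddCommGroup F] [NormedSpace ℝ F] (B : E →L[ℝ] F) {s : Set E}
    (hs : IsCompact (closure (toWeakSpace ℝ E '' s))) :
    IsCompact (closure (toWeakSpace ℝ F '' (B '' s))) := by
  refine (hs.image (WeakSpace.map B).continuous).closure_of_subset ?_
  rintro - ⟨-, ⟨x, hx, rfl⟩, rfl⟩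
  exact ⟨toWeakSpace ℝ E x, subset_closure ⟨x, hx, rfl⟩, rfl⟩

theorem IsWeaklyCompactOp.comp_comp {K L : Type*} [TopologicalSpace K] [CompactSpace K]
    [TopologicalSpace L] [CompactSpace L] {S : C(K, ℝ) →L[ℝ] C(K, ℝ)} (hS : IsWeaklyCompactOp S)
    {A : C(L, ℝ) →L[ℝ] C(K, ℝ)} (hA : ‖A‖ ≤ 1) (B : C(K, ℝ) →L[ℝ] C(L, ℝ)) :
    IsWeaklyCompactOp (B.comp (S.comp A)) := by
  have hball : A '' Metric.closedBall 0 1 ⊆ Metric.closedBall 0 1 := by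
    rintro - ⟨f, hf, rfl⟩
    rw [mem_closedBall_zero_iff] at hf ⊢
    exact (A.le_opNorm f).trans (mul_le_one₀ hA (norm_nonneg f) hf)
  refine (isCompact_closure_toWeakSpace_image_image B hS).closure_of_subset
    (subset_closure.trans' (Set.image_mono ?_))
  rw [ContinuousLinearMap.coe_comp, ContinuousLinearMap.coe_comp, Set.image_comp,
    Set.image_comp]
  exact Set.image_mono (Set.image_mono hball)

theorem piOp_norm_le (K : Type*) [TopologicalSpace K] [CompactSpace K] (i : Bool) :
    ‖piOp K i‖ ≤ 1 :=
  LinearMap.mkContinuous_norm_le _ zero_le_one _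

theorem sigmaOp_comp_mul_comp_piOp {K : Type*} [TopologicalSpace K] [CompactSpace K] (i : Bool)
    (g : C(K, ℝ)) :
    (sigmaOp K i).comp ((ContinuousLinearMap.mul ℝ C(K, ℝ) g).comp (piOp K i)) =
      ContinuousLinearMap.mul ℝ C(K × Bool, ℝ) (sigmaOp K i g) := by
  ext f ⟨x, b⟩
  by_cases hb : b = i <;> simp [hb]

theorem diagonal_component_weakMultiplication_general
    {K : Type*} [TopologicalSpace K] [CompactSpace K]
    (hfew : ∀ S : C(K, ℝ) →L[ℝ] C(K, ℝ), IsWeakMultiplication S)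
    (T : C(K × Bool, ℝ) →L[ℝ] C(K × Bool, ℝ)) (i : Bool) :
    IsWeakMultiplication
      ((sigmaOp K i).comp ((piOp K i).comp (T.comp ((sigmaOp K i).comp (piOp K i))))) := by
  obtain ⟨g, S, hS, hT⟩ := hfew ((piOp K i).comp (T.comp (sigmaOp K i)))
  refine ⟨sigmaOp K i g, (sigmaOp K i).comp (S.comp (piOp K i)),
    hS.comp_comp (piOp_norm_le K i) _, ?_⟩
  calc (sigmaOp K i).comp ((piOp K i).comp (T.comp ((sigmaOp K i).comp (piOp K i))))
      = (sigmaOp K i).comp (((piOp K i).comp (T.comp (sigmaOp K i))).comp (piOp K i)) := rfl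
    _ = _ := by
      rw [hT, ContinuousLinearMap.add_comp, ContinuousLinearMap.comp_add,
        sigmaOp_comp_mul_comp_piOp]

/-- If every operator on `C(K, ℝ)` is a weak multiplication, then for every operator `T` on
`C(K × Bool, ℝ)` and every `i : Bool`, the operator `σ_i ∘ π_i ∘ T ∘ σ_i ∘ π_i` is a weak
multiplication on `C(K × Bool, ℝ)`. -/
theorem diagonal_component_weakMultiplication
    {K : Type*} [TopologicalSpace K] [CompactSpace K] [T2Space K]
    (hfew : ∀ S : C(K, ℝ) →L[ℝ] C(K, ℝ), IsWeakMultiplication S)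
    (T : C(K × Bool, ℝ) →L[ℝ] C(K × Bool, ℝ)) (i : Bool) :
    IsWeakMultiplication
      ((sigmaOp K i).comp ((piOp K i).comp (T.comp ((sigmaOp K i).comp (piOp K i))))) :=
  diagonal_component_weakMultiplication_general hfew T i
end
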